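/- arXiv:2401.05256 — 11 statements merged into one kernel-verified Lean document; each statement's English description precedes it below -/
import Mathlib

section
/- Let A and B be d×d real symmetric matrices. Then for every vector v ∈ ℝ^d, ‖(A ∘ B) v‖ ≤ √d · (max_{i,j} |A_{ij}|) · ‖B‖₂ · ‖v‖, where ∘ denotes the Hadamard product and ‖·‖₂ the spectral norm. -/
/-!
Row `i` of `(A ∘ B) v` is row `i` of `B` applied to the vector `(A i j * v j)_j`, whose norm is at
most `max |A i j| * ‖v‖`. Hence every coordinate of `(A ∘ B) v` is bounded by
`max |A i j| * ‖B‖₂ * ‖v‖`, and the factor `√d` comes from passing from this coordinatewise bound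
to the Euclidean norm.
-/

/-- The spectral (ℓ²-operator) norm of a square real matrix. -/
noncomputable def specNorm {d : ℕ} (A : Matrix (Fin d) (Fin d) ℝ) : ℝ :=
  ‖Matrix.toEuclideanCLM (𝕜 := ℝ) A‖

open Matrix

variable {𝕜 ι : Type*} [RCLike 𝕜] [Fintype ι]

namespace EuclideanSpace

lemma norm_le_norm_of_forall_norm_le {x y : EuclideanSpace 𝕜 ι} (h : ∀ i, ‖x i‖ ≤ ‖y i‖) :
    ‖x‖ ≤ ‖y‖ := by
  rw [EuclideanSpace.norm_eq, EuclideanSpace.norm_eq]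
  gcongr with i
  exact h i

lemma norm_le_sqrt_card_mul_of_forall_norm_le {x : EuclideanSpace 𝕜 ι} {C : ℝ}
    (h : ∀ i, ‖x i‖ ≤ C) : ‖x‖ ≤ √(Fintype.card ι) * C := by
  cases isEmpty_or_nonempty ι with
  | inl => simp [EuclideanSpace.norm_eq]
  | inr hι =>
    have hC : 0 ≤ C := (norm_nonneg _).trans (h hι.some)
    calc ‖x‖ = √(∑ i, ‖x i‖ ^ 2) := EuclideanSpace.norm_eq x
      _ ≤ √(∑ _i : ι, C ^ 2) := by gcongr with i; exact h i
      _ = √(Fintype.card ι) * C := by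
        rw [Finset.sum_const, Finset.card_univ, nsmul_eq_mul,
          Real.sqrt_mul (Nat.cast_nonneg _), Real.sqrt_sq hC]

end EuclideanSpace

namespace Matrix

lemma hadamard_mulVec_apply {m R : Type*} [CommSemiring R] (A B : Matrix m ι R) (v : ι → R)
    (i : m) : (A ⊙ B *ᵥ v) i = (B *ᵥ fun j => A i j * v j) i := by
  simp only [mulVec, dotProduct, hadamard_apply]
  exact Finset.sum_congr rfl fun j _ => by ring

variable [DecidableEq ι]

lemma norm_toEuclideanCLM_hadamard_apply_le {A : Matrix ι ι 𝕜} {M : ℝ}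
    (hA : ∀ i j, ‖A i j‖ ≤ M) (B : Matrix ι ι 𝕜) (v : EuclideanSpace 𝕜 ι) (i : ι) :
    ‖toEuclideanCLM (𝕜 := 𝕜) (A ⊙ B) v i‖ ≤ M * ‖toEuclideanCLM (𝕜 := 𝕜) B‖ * ‖v‖ := by
  have hM : 0 ≤ M := (norm_nonneg _).trans (hA i i)
  set w : EuclideanSpace 𝕜 ι := WithLp.toLp 2 fun j => A i j * v j
  have hw : ‖w‖ ≤ M * ‖v‖ := by
    calc ‖w‖ ≤ ‖(M : 𝕜) • v‖ := EuclideanSpace.norm_le_norm_of_forall_norm_le fun j => by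
          simp only [w, PiLp.smul_apply, smul_eq_mul, norm_mul, RCLike.norm_ofReal,
            abs_of_nonneg hM]
          gcongr
          exact hA i j
      _ = M * ‖v‖ := by rw [norm_smul, RCLike.norm_ofReal, abs_of_nonneg hM]
  have hrow : toEuclideanCLM (𝕜 := 𝕜) (A ⊙ B) v i = toEuclideanCLM (𝕜 := 𝕜) B w i :=
    hadamard_mulVec_apply A B v i
  calc ‖toEuclideanCLM (𝕜 := 𝕜) (A ⊙ B) v i‖
      = ‖toEuclideanCLM (𝕜 := 𝕜) B w i‖ := by rw [hrow]
    _ ≤ ‖toEuclideanCLM (𝕜 := 𝕜) B w‖ := PiLp.norm_apply_le _ i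
    _ ≤ ‖toEuclideanCLM (𝕜 := 𝕜) B‖ * ‖w‖ := ContinuousLinearMap.le_opNorm _ _
    _ ≤ ‖toEuclideanCLM (𝕜 := 𝕜) B‖ * (M * ‖v‖) := by gcongr
    _ = M * ‖toEuclideanCLM (𝕜 := 𝕜) B‖ * ‖v‖ := by ring

lemma norm_toEuclideanCLM_hadamard_le {A : Matrix ι ι 𝕜} {M : ℝ}
    (hA : ∀ i j, ‖A i j‖ ≤ M) (B : Matrix ι ι 𝕜) (v : EuclideanSpace 𝕜 ι) :
    ‖toEuclideanCLM (𝕜 := 𝕜) (A ⊙ B) v‖ ≤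
      √(Fintype.card ι) * M * ‖toEuclideanCLM (𝕜 := 𝕜) B‖ * ‖v‖ := by
  simpa only [mul_assoc] using EuclideanSpace.norm_le_sqrt_card_mul_of_forall_norm_le
    (norm_toEuclideanCLM_hadamard_apply_le hA B v)

end Matrix

theorem stmt1_general {d : ℕ} (hd : 0 < d) (A B : Matrix (Fin d) (Fin d) ℝ)
    (v : EuclideanSpace ℝ (Fin d)) :
    ‖Matrix.toEuclideanCLM (𝕜 := ℝ) (Matrix.hadamard A B) v‖ ≤
      Real.sqrt d *
        (Finset.univ.sup' (Finset.univ_nonempty_iff.mpr ⟨⟨0, hd⟩⟩) fun i =>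
          Finset.univ.sup' (Finset.univ_nonempty_iff.mpr ⟨⟨0, hd⟩⟩) fun j => |A i j|) *
        specNorm B * ‖v‖ := by
  refine (norm_toEuclideanCLM_hadamard_le (fun i j => ?_) B v).trans_eq (by
    rw [Fintype.card_fin, specNorm])
  exact Finset.le_sup'_of_le _ (Finset.mem_univ i) (Finset.le_sup' (fun j => |A i j|)
    (Finset.mem_univ j))

/-- For symmetric matrices `A`, `B` and every vector `v`,
`‖(A ∘ B) v‖ ≤ √d ⬝ (max_{i,j} |A_{ij}|) ⬝ ‖B‖₂ ⬝ ‖v‖`. -/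
theorem stmt1 {d : ℕ} (hd : 0 < d) (A B : Matrix (Fin d) (Fin d) ℝ)
    (hA : A.IsSymm) (hB : B.IsSymm) (v : EuclideanSpace ℝ (Fin d)) :
    ‖Matrix.toEuclideanCLM (𝕜 := ℝ) (Matrix.hadamard A B) v‖ ≤
      Real.sqrt d *
        (Finset.univ.sup' (Finset.univ_nonempty_iff.mpr ⟨⟨0, hd⟩⟩) fun i =>
          Finset.univ.sup' (Finset.univ_nonempty_iff.mpr ⟨⟨0, hd⟩⟩) fun j => |A i j|) *
        specNorm B * ‖v‖ :=
  stmt1_general hd A B v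
end

section
/- Let u, u' ∈ ℝ^d be unit vectors and η, η' ∈ (−1, 1). Define the 2d×2d block matrix K with diagonal blocks I_d + (η²/(1−η²)) uuᵀ + (η'²/(1−η'²)) u'u'ᵀ and off-diagonal blocks −(η/(1−η²)) uuᵀ − (η'/(1−η'²)) u'u'ᵀ. Then det(K) = (1 − (uᵀu')² η η')² / ((1−η²)(1−η'²)). -/
open Matrix

lemma detBlocks {n : Type*} [Fintype n] [DecidableEq n] (A B : Matrix n n ℝ) :
    (fromBlocks A B B A).det = (A - B).det * (A + B).det := by
  have h : (fromBlocks (1 : Matrix n n ℝ) 0 1 1) * (fromBlocks A B B A)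
      * (fromBlocks 1 0 (-1) 1) = fromBlocks (A - B) B 0 (A + B) := by
    simp [Matrix.fromBlocks_multiply, Matrix.mul_neg, sub_eq_add_neg]
    constructor <;> abel
  have hdet := congrArg Matrix.det h
  rw [Matrix.det_mul, Matrix.det_mul, Matrix.det_fromBlocks_zero₁₂,
    Matrix.det_fromBlocks_zero₁₂, Matrix.det_fromBlocks_zero₂₁] at hdet
  simpa using hdet

lemma rank2det {d : ℕ} (u u' : Fin d → ℝ)
    (hu : ∑ i, u i ^ 2 = 1) (hu' : ∑ i, u' i ^ 2 = 1) (a b : ℝ) :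
    (1 + a • Matrix.vecMulVec u u + b • Matrix.vecMulVec u' u').det
      = (1 + a) * (1 + b) - a * b * (u ⬝ᵥ u') ^ 2 := by
  set U : Matrix (Fin d) (Fin 2) ℝ := Matrix.of fun i j => if j = 0 then a * u i else b * u' i with hU
  set V : Matrix (Fin 2) (Fin d) ℝ := Matrix.of fun j i => if j = 0 then u i else u' i with hV
  have hUV : a • Matrix.vecMulVec u u + b • Matrix.vecMulVec u' u' = U * V := by
    ext i k
    simp [hU, hV, Matrix.mul_apply, Fin.sum_univ_two, Matrix.vecMulVec_apply]
    ring
  have h1 : (1 + a • Matrix.vecMulVec u u + b • Matrix.vecMulVec u' u').det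
      = (1 + U * V).det := by rw [add_assoc, hUV]
  rw [h1, Matrix.det_one_add_mul_comm]
  have hmat : V * U = !![a, b * (u ⬝ᵥ u'); a * (u ⬝ᵥ u'), b] := by
    ext j k
    fin_cases j <;> fin_cases k <;>
      simp [hU, hV, Matrix.mul_apply, dotProduct]
    · calc ∑ i, u i * (a * u i) = a * ∑ i, u i ^ 2 := by
            rw [Finset.mul_sum]; exact Finset.sum_congr rfl fun i _ => by ring
        _ = a := by rw [hu, mul_one]
    · calc ∑ i, u i * (b * u' i) = b * ∑ i, u i * u' i := by
            rw [Finset.mul_sum]; exact Finset.sum_congr rfl fun i _ => by ring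
        _ = _ := rfl
    · calc ∑ i, u' i * (a * u i) = a * ∑ i, u i * u' i := by
            rw [Finset.mul_sum]; exact Finset.sum_congr rfl fun i _ => by ring
        _ = _ := rfl
    · calc ∑ i, u' i * (b * u' i) = b * ∑ i, u' i ^ 2 := by
            rw [Finset.mul_sum]; exact Finset.sum_congr rfl fun i _ => by ring
        _ = b := by rw [hu', mul_one]
  rw [hmat, Matrix.det_fin_two]
  simp [Matrix.one_apply]
  ring

/-- Determinant of the block matrix `K` built from unit vectors `u, u'` and
parameters `η, η' ∈ (−1,1)`. -/
theorem stmt4 {d : ℕ} (u u' : Fin d → ℝ)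
    (hu : ∑ i, u i ^ 2 = 1) (hu' : ∑ i, u' i ^ 2 = 1)
    (η η' : ℝ) (hη : η ∈ Set.Ioo (-1 : ℝ) 1) (hη' : η' ∈ Set.Ioo (-1 : ℝ) 1) :
    (Matrix.fromBlocks
        (1 + (η ^ 2 / (1 - η ^ 2)) • Matrix.vecMulVec u u
          + (η' ^ 2 / (1 - η' ^ 2)) • Matrix.vecMulVec u' u')
        (-((η / (1 - η ^ 2)) • Matrix.vecMulVec u u)
          - (η' / (1 - η' ^ 2)) • Matrix.vecMulVec u' u')
        (-((η / (1 - η ^ 2)) • Matrix.vecMulVec u u)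
          - (η' / (1 - η' ^ 2)) • Matrix.vecMulVec u' u')
        (1 + (η ^ 2 / (1 - η ^ 2)) • Matrix.vecMulVec u u
          + (η' ^ 2 / (1 - η' ^ 2)) • Matrix.vecMulVec u' u')).det
      = (1 - (u ⬝ᵥ u') ^ 2 * η * η') ^ 2 / ((1 - η ^ 2) * (1 - η' ^ 2)) := by
  obtain ⟨hη1, hη2⟩ := hη
  obtain ⟨hη'1, hη'2⟩ := hη'
  have h1 : (1 : ℝ) - η ^ 2 ≠ 0 := by nlinarith
  have h2 : (1 : ℝ) - η' ^ 2 ≠ 0 := by nlinarith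
  rw [detBlocks]
  have hm : (1 + (η ^ 2 / (1 - η ^ 2)) • Matrix.vecMulVec u u
        + (η' ^ 2 / (1 - η' ^ 2)) • Matrix.vecMulVec u' u')
      - (-((η / (1 - η ^ 2)) • Matrix.vecMulVec u u)
        - (η' / (1 - η' ^ 2)) • Matrix.vecMulVec u' u')
      = 1 + (η ^ 2 / (1 - η ^ 2) + η / (1 - η ^ 2)) • Matrix.vecMulVec u u
        + (η' ^ 2 / (1 - η' ^ 2) + η' / (1 - η' ^ 2)) • Matrix.vecMulVec u' u' := by
    rw [add_smul, add_smul]; abel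
  have hp : (1 + (η ^ 2 / (1 - η ^ 2)) • Matrix.vecMulVec u u
        + (η' ^ 2 / (1 - η' ^ 2)) • Matrix.vecMulVec u' u')
      + (-((η / (1 - η ^ 2)) • Matrix.vecMulVec u u)
        - (η' / (1 - η' ^ 2)) • Matrix.vecMulVec u' u')
      = 1 + (η ^ 2 / (1 - η ^ 2) - η / (1 - η ^ 2)) • Matrix.vecMulVec u u
        + (η' ^ 2 / (1 - η' ^ 2) - η' / (1 - η' ^ 2)) • Matrix.vecMulVec u' u' := by
    rw [sub_smul, sub_smul]; abel
  rw [hm, hp, rank2det u u' hu hu', rank2det u u' hu hu']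
  field_simp
  ring
end

section
/- Let ρ ∈ [0,1] and let Σ₁₂, Σ₁₃, Σ₂₃ be the 2×2 correlation matrices with off-diagonal entries −ρ, ρ, ρ respectively. There exists a 3×3 symmetric positive semi-definite matrix Σ with unit diagonal whose three 2×2 principal submatrices (on index pairs {1,2}, {1,3}, {2,3}) equal Σ₁₂, Σ₁₃, Σ₂₃ if and only if ρ ≤ 1/2. -/
/-!
Any completion is forced by symmetry to be `(1 + ρ) • 1 - ρ • w wᵀ` with `w = (1, 1, -1)`.
Its quadratic form is `(1 + ρ) ‖x‖² - ρ ⟪w, x⟫²`: at `x = w` it equals `3 (1 - 2ρ)`, and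
for `ρ ≤ 1/2` Cauchy–Schwarz `⟪w, x⟫² ≤ 3 ‖x‖²` makes it nonnegative.
-/

open Matrix

lemma dotProduct_sq_le {n : Type*} [Fintype n] (v w : n → ℝ) :
    (v ⬝ᵥ w) ^ 2 ≤ (v ⬝ᵥ v) * (w ⬝ᵥ w) := by
  simpa only [dotProduct, sq] using Finset.sum_mul_sq_le_sq_mul_sq Finset.univ v w

section RankOnePerturbation

variable {n : Type*} [Fintype n] [DecidableEq n]

lemma dotProduct_smul_one_sub_smul_vecMulVec_mulVec (a b : ℝ) (w x : n → ℝ) :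
    x ⬝ᵥ ((a • 1 - b • vecMulVec w w) *ᵥ x) = a * (x ⬝ᵥ x) - b * (w ⬝ᵥ x) ^ 2 := by
  simp only [sub_mulVec, smul_mulVec, one_mulVec, vecMulVec_mulVec, dotProduct_sub,
    dotProduct_smul, smul_eq_mul, MulOpposite.smul_eq_mul_unop, MulOpposite.unop_op]
  rw [dotProduct_comm x w]
  ring

lemma posSemidef_smul_one_sub_smul_vecMulVec (w : n → ℝ) {a b : ℝ} (hb : 0 ≤ b)
    (hab : b * (w ⬝ᵥ w) ≤ a) : (a • 1 - b • vecMulVec w w).PosSemidef := by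
  refine .of_dotProduct_mulVec_nonneg (by simp [IsHermitian]) fun x => ?_
  rw [star_trivial, dotProduct_smul_one_sub_smul_vecMulVec_mulVec, sub_nonneg]
  have hx : 0 ≤ x ⬝ᵥ x := Finset.sum_nonneg fun i _ => mul_self_nonneg (x i)
  calc b * (w ⬝ᵥ x) ^ 2 ≤ b * ((w ⬝ᵥ w) * (x ⬝ᵥ x)) := by gcongr; exact dotProduct_sq_le w x
    _ ≤ a * (x ⬝ᵥ x) := by rw [← mul_assoc]; gcongr

end RankOnePerturbation

def corrCompletion (ρ : ℝ) : Matrix (Fin 3) (Fin 3) ℝ :=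
  (1 + ρ) • 1 - ρ • vecMulVec ![1, 1, -1] ![1, 1, -1]

lemma corrCompletion_eq (ρ : ℝ) : corrCompletion ρ = !![1, -ρ, ρ; -ρ, 1, ρ; ρ, ρ, 1] := by
  ext i j
  fin_cases i <;> fin_cases j <;> simp [corrCompletion, vecMulVec]

lemma eq_corrCompletion {S : Matrix (Fin 3) (Fin 3) ℝ} {ρ : ℝ} (hS : S.IsHermitian)
    (hdiag : ∀ i, S i i = 1) (h01 : S 0 1 = -ρ) (h02 : S 0 2 = ρ) (h12 : S 1 2 = ρ) :
    S = corrCompletion ρ := by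
  rw [corrCompletion_eq]
  ext i j
  fin_cases i <;> fin_cases j <;>
    simp [hdiag, h01, h02, h12, ← hS.apply 1 0, ← hS.apply 2 0, ← hS.apply 2 1]

/-- For `ρ ∈ [0,1]`, the three `2×2` correlation matrices with off-diagonal entries
`−ρ, ρ, ρ` admit a common completion to a `3×3` correlation matrix if and only if
`ρ ≤ 1/2`. -/
theorem stmt5 (ρ : ℝ) (hρ : ρ ∈ Set.Icc (0 : ℝ) 1) :
    (∃ S : Matrix (Fin 3) (Fin 3) ℝ, S.PosSemidef ∧ (∀ i, S i i = 1) ∧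
      S 0 1 = -ρ ∧ S 0 2 = ρ ∧ S 1 2 = ρ) ↔ ρ ≤ 1 / 2 := by
  have hw : (![1, 1, -1] : Fin 3 → ℝ) ⬝ᵥ ![1, 1, -1] = 3 := by
    simp [dotProduct, Fin.sum_univ_three]; norm_num
  constructor
  · rintro ⟨S, hS, hdiag, h01, h02, h12⟩
    obtain rfl := eq_corrCompletion hS.isHermitian hdiag h01 h02 h12
    have hquad := hS.dotProduct_mulVec_nonneg ![1, 1, -1]
    rw [star_trivial, corrCompletion, dotProduct_smul_one_sub_smul_vecMulVec_mulVec, hw] at hquad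
    linarith
  · intro h
    refine ⟨corrCompletion ρ,
      posSemidef_smul_one_sub_smul_vecMulVec _ hρ.1 (by rw [hw]; linarith), ?_⟩
    rw [corrCompletion_eq]
    refine ⟨fun i => ?_, rfl, rfl, rfl⟩
    fin_cases i <;> rfl
end

section
/- Let d ≥ 3 and let θ₁, ..., θ_d ∈ [0, π] with θ_j ≤ π/2 for all j ≥ 2. Let A be the d×d partial symmetric matrix with unit diagonal and specified entries A_{j,j+1} = cos θ_j for j ∈ [d−1] and A_{1,d} = cos θ_d (all other off-diagonal entries unspecified). Then A admits a positive semi-definite completion if and only if 2·max_{j∈[d]} θ_j ≤ Σ_{j=1}^d θ_j. -/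
/-!
A positive semidefinite matrix with unit diagonal is the Gram matrix of unit vectors, and its
off-diagonal entries are the cosines of the angles between them. Angles between vectors obey the
triangle inequality, so going around the cycle gives `θ k ≤ ∑_{j ≠ k} θ j` for every `k`.

Conversely, unit vectors realising the cycle are built in `ℝ³` one at a time along the path
`1 → 2 → ⋯ → d - 1 → 0`, keeping track of the angle `β` between the first and the current
last vector: a new unit vector at prescribed angles `α`, `t` to two unit vectors at angle `β`
exists whenever `α, β, t` satisfy the spherical triangle inequalities. Since all angles but
`θ 0` are at most `π / 2`, the intermediate angles `β` can always be chosen to keep these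
inequalities, and the path closes up at angle `θ 0`.
-/

open Real InnerProductGeometry Matrix Finset Module
open scoped RealInnerProductSpace MatrixOrder
open Fin.NatCast

theorem Matrix.PosSemidef.exists_eq_gram {n : Type*} [Fintype n] {S : Matrix n n ℝ}
    (hS : S.PosSemidef) : ∃ v : n → EuclideanSpace ℝ n, S = gram ℝ v := by
  classical
  obtain ⟨B, rfl⟩ := CStarAlgebra.nonneg_iff_eq_star_mul_self.mp hS.nonneg
  refine ⟨fun i => WithLp.toLp 2 (fun k => B k i), ?_⟩
  ext i j
  simp [Matrix.mul_apply, EuclideanSpace.inner_eq_star_dotProduct, dotProduct, mul_comm]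

theorem abs_cos_sub_cos_mul_cos_le {α β t : ℝ} (h₁ : α ≤ β + t) (h₂ : β ≤ α + t)
    (h₃ : t ≤ α + β) (h₄ : α + β + t ≤ 2 * π) :
    |cos t - cos α * cos β| ≤ sin α * sin β := by
  have hcos_sub : cos t ≤ cos (α - β) := by
    rw [← cos_abs (α - β)]
    exact cos_le_cos_of_nonneg_of_le_pi (abs_nonneg _) (by linarith)
      (abs_le.2 ⟨by linarith, by linarith⟩)
  have hcos_add : cos (α + β) ≤ cos t := by
    rcases le_total (α + β) π with h | h
    · exact cos_le_cos_of_nonneg_of_le_pi (by linarith) h h₃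
    · rw [← cos_two_pi_sub]
      exact cos_le_cos_of_nonneg_of_le_pi (by linarith) (by linarith) (by linarith)
  rw [cos_sub] at hcos_sub
  rw [cos_add] at hcos_add
  exact abs_le.2 ⟨by linarith, by linarith⟩

section InnerProductSpace

variable {V : Type*} [NormedAddCommGroup V] [InnerProductSpace ℝ V]

theorem angle_le_sum_range_angle {v : ℕ → V} (h0 : v 0 ≠ 0) (n : ℕ) :
    angle (v 0) (v n) ≤ ∑ i ∈ range n, angle (v i) (v (i + 1)) := by
  induction n with
  | zero => simp [angle_self h0]
  | succ n ih =>
    rw [sum_range_succ]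
    exact (angle_le_angle_add_angle _ (v n) _).trans (by linarith)

theorem two_mul_angle_le_sum_angle_cycle {n : ℕ} [NeZero n] {v : Fin n → V} (hv : ∀ j, v j ≠ 0)
    (k : Fin n) : 2 * angle (v k) (v (k + 1)) ≤ ∑ j, angle (v j) (v (j + 1)) := by
  obtain ⟨m, rfl⟩ : ∃ m, n = m + 1 := ⟨n - 1, (Nat.succ_pred_eq_of_ne_zero (NeZero.ne n)).symm⟩
  set w : ℕ → V := fun i => v (k + 1 + i)
  have hw : ∀ i : ℕ, w (i + 1) = v (k + 1 + i + 1) := fun i => by simp [w, add_assoc]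
  have hk : k + 1 + (m : Fin (m + 1)) = k := by simp [add_assoc, add_comm (1 : Fin (m + 1))]
  have hwm : w m = v k := congrArg v hk
  have hpath := angle_le_sum_range_angle (v := w) (by simpa [w] using hv _) m
  have hcycle : ∑ j, angle (v j) (v (j + 1)) =
      ∑ i ∈ range m, angle (w i) (w (i + 1)) + angle (v k) (v (k + 1)) := by
    rw [← Fintype.sum_equiv (Equiv.addLeft (k + 1)) (fun j => angle (w j) (w (j + 1))) _
      fun j => by simp [w, add_assoc],
      Fin.sum_univ_eq_sum_range (fun i => angle (w i) (w (i + 1))), sum_range_succ, hw, hk, hwm]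
  rw [hwm, show w 0 = v (k + 1) by simp [w], angle_comm] at hpath
  linarith

theorem angle_eq_of_inner_eq_cos {x y : V} (hx : ‖x‖ = 1) (hy : ‖y‖ = 1) {θ : ℝ}
    (hxy : ⟪x, y⟫ = cos θ) (h0 : 0 ≤ θ) (hπ : θ ≤ π) : angle x y = θ := by
  rw [angle, hx, hy, hxy, mul_one, div_one, arccos_cos h0 hπ]

theorem exists_norm_eq_one_inner_eq_zero [FiniteDimensional ℝ V] (hV : 3 ≤ finrank ℝ V)
    (u w : V) : ∃ e : V, ‖e‖ = 1 ∧ ⟪u, e⟫ = 0 ∧ ⟪w, e⟫ = 0 := by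
  set K := Submodule.span ℝ ({u, w} : Set V)
  have hK : finrank ℝ K ≤ 2 := by
    classical
    have := finrank_span_finset_le_card (R := ℝ) ({u, w} : Finset V)
    rw [Set.finrank, coe_pair] at this
    exact this.trans card_le_two
  have : Nontrivial Kᗮ :=
    Module.nontrivial_of_finrank_pos (R := ℝ) (by have := K.finrank_add_finrank_orthogonal; omega)
  obtain ⟨e, he⟩ := exists_norm_eq Kᗮ zero_le_one
  exact ⟨e, he, K.inner_right_of_mem_orthogonal (Submodule.subset_span (by simp)) e.2,
    K.inner_right_of_mem_orthogonal (Submodule.subset_span (by simp)) e.2⟩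

theorem exists_norm_eq_one_inner_eq_of_abs_le {u w e : V} (hu : ‖u‖ = 1) (hw : ‖w‖ = 1)
    (he : ‖e‖ = 1) (hue : ⟪u, e⟫ = 0) (hwe : ⟪w, e⟫ = 0) {α β t : ℝ} (huw : ⟪u, w⟫ = cos β)
    (h : |cos t - cos α * cos β| ≤ sin α * sin β) :
    ∃ z : V, ‖z‖ = 1 ∧ ⟪u, z⟫ = cos α ∧ ⟪w, z⟫ = cos t := by
  set r := cos t - cos α * cos β
  obtain ⟨c, hc, hc2⟩ : ∃ c, c * sin β ^ 2 = r ∧ c ^ 2 * sin β ^ 2 ≤ sin α ^ 2 := by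
    rcases eq_or_ne (sin β) 0 with h0 | h0
    · rw [h0, mul_zero, abs_nonpos_iff] at h
      exact ⟨0, by simp [h], by simp [h0, sq_nonneg]⟩
    refine ⟨r / sin β ^ 2, div_mul_cancel₀ r (pow_ne_zero 2 h0), ?_⟩
    have hr : r ^ 2 ≤ (sin α * sin β) ^ 2 := sq_le_sq' (abs_le.1 h).1 (abs_le.1 h).2
    rw [show (r / sin β ^ 2) ^ 2 * sin β ^ 2 = r ^ 2 / sin β ^ 2 by field_simp,
      div_le_iff₀ (by positivity), ← mul_pow]
    exact hr
  have huu : ⟪u, u⟫ = 1 := by rw [real_inner_self_eq_norm_sq, hu, one_pow]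
  have hww : ⟪w, w⟫ = 1 := by rw [real_inner_self_eq_norm_sq, hw, one_pow]
  have hee : ⟪e, e⟫ = 1 := by rw [real_inner_self_eq_norm_sq, he, one_pow]
  have hβ := sin_sq_add_cos_sq β
  -- `w - cos β • u` is orthogonal to `u` and has squared norm `sin β ^ 2`
  set z := cos α • u + c • (w - cos β • u) + √(sin α ^ 2 - c ^ 2 * sin β ^ 2) • e
  refine ⟨z, ?_, ?_, ?_⟩
  · rw [norm_eq_sqrt_real_inner, ← sqrt_one]
    congr 1
    simp only [z, inner_add_left, inner_add_right, inner_sub_left, inner_sub_right,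
      real_inner_smul_left, real_inner_smul_right, huu, hww, hee, hue, hwe, huw,
      real_inner_comm u, real_inner_comm w e]
    linear_combination sq_sqrt (sub_nonneg.2 hc2) + sin_sq_add_cos_sq α - c ^ 2 * hβ
  · simp only [z, inner_add_right, inner_sub_right, real_inner_smul_right, huu, hue, huw]
    ring
  · simp only [z, inner_add_right, inner_sub_right, real_inner_smul_right, hww, hwe, huw,
      real_inner_comm u w]
    linear_combination hc - c * hβ

theorem exists_norm_eq_one_inner_eq_cos [FiniteDimensional ℝ V] (hV : 3 ≤ finrank ℝ V)
    {u w : V} (hu : ‖u‖ = 1) (hw : ‖w‖ = 1) {α β t : ℝ} (huw : ⟪u, w⟫ = cos β)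
    (h₁ : α ≤ β + t) (h₂ : β ≤ α + t) (h₃ : t ≤ α + β) (h₄ : α + β + t ≤ 2 * π) :
    ∃ z : V, ‖z‖ = 1 ∧ ⟪u, z⟫ = cos α ∧ ⟪w, z⟫ = cos t := by
  obtain ⟨e, he, hue, hwe⟩ := exists_norm_eq_one_inner_eq_zero hV u w
  exact exists_norm_eq_one_inner_eq_of_abs_le hu hw he hue hwe huw
    (abs_cos_sub_cos_mul_cos_le h₁ h₂ h₃ h₄)

theorem exists_chain_norm_eq_one_inner_eq_cos [FiniteDimensional ℝ V] (hV : 3 ≤ finrank ℝ V)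
    (m : ℕ) {θ : ℕ → ℝ} (hθ : ∀ j < m, θ j ∈ Set.Icc 0 (π / 2)) {α : ℝ} (hα : α ∈ Set.Icc 0 π)
    (hαθ : α ≤ ∑ j ∈ range m, θ j) (hθα : ∀ j < m, 2 * θ j ≤ α + ∑ j ∈ range m, θ j) :
    ∃ v : ℕ → V, (∀ j, ‖v j‖ = 1) ∧ (∀ j < m, ⟪v j, v (j + 1)⟫ = cos (θ j)) ∧
      ⟪v 0, v m⟫ = cos α := by
  induction m generalizing α with
  | zero =>
    have : Nontrivial V := Module.nontrivial_of_finrank_pos (R := ℝ) (by omega)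
    obtain ⟨e, he⟩ := exists_norm_eq V zero_le_one
    have hα0 : α = 0 := le_antisymm (by simpa using hαθ) hα.1
    refine ⟨fun _ => e, fun _ => he, by simp, ?_⟩
    rw [hα0, cos_zero, real_inner_self_eq_norm_sq, he, one_pow]
  | succ m ih =>
    set S := ∑ j ∈ range m, θ j
    obtain ⟨hα0, hαπ⟩ := hα
    obtain ⟨hθm0, hθmπ⟩ := hθ m m.lt_succ_self
    have hS : 0 ≤ S := sum_nonneg fun j hj => (hθ j (by simp at hj; omega)).1
    have hθS : ∀ j < m, θ j ≤ S := fun j hj =>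
      single_le_sum (fun i hi => (hθ i (by simp at hi; omega)).1) (mem_range.2 hj)
    rw [sum_range_succ] at hαθ hθα
    have hθmα := hθα m m.lt_succ_self
    have hπ := pi_pos
    -- the closing angle asked of the shorter chain
    set β := min S (min (α + θ m) (2 * π - α - θ m))
    have hβS : β ≤ S := min_le_left _ _
    have hβ₁ : β ≤ α + θ m := (min_le_right _ _).trans (min_le_left _ _)
    have hβ₂ : β ≤ 2 * π - α - θ m := (min_le_right _ _).trans (min_le_right _ _)
    have hβ₃ : α - θ m ≤ β := le_min (by linarith) (le_min (by linarith) (by linarith))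
    have hβ₄ : θ m - α ≤ β := le_min (by linarith) (le_min (by linarith) (by linarith))
    have hθβ : ∀ j < m, 2 * θ j ≤ β + S := fun j hj => by
      have hjS := hθS j hj
      have hjα := hθα j (by omega)
      have hjπ := (hθ j (by omega)).2
      have : 2 * θ j - S ≤ β := le_min (by linarith) (le_min (by linarith) (by linarith))
      linarith
    obtain ⟨v, hv, hedge, hclose⟩ := ih (fun j hj => hθ j (by omega))
      ⟨by linarith, by linarith⟩ hβS hθβ
    obtain ⟨z, hz, hz0, hzm⟩ := exists_norm_eq_one_inner_eq_cos hV (hv 0) (hv m) hclose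
      (by linarith) hβ₁ (by linarith) (by linarith)
    refine ⟨Function.update v (m + 1) z, fun j => ?_, fun j hj => ?_, ?_⟩
    · rcases eq_or_ne j (m + 1) with rfl | hj
      · simpa
      · simpa [hj] using hv j
    · rcases lt_or_eq_of_le (Nat.lt_succ_iff.1 hj) with hj | rfl
      · rw [Function.update_of_ne (by omega), Function.update_of_ne (by omega)]
        exact hedge j hj
      · simpa using hzm
    · simpa using hz0

theorem exists_cycle_norm_eq_one_inner_eq_cos [FiniteDimensional ℝ V] (hV : 3 ≤ finrank ℝ V)
    {m : ℕ} {θ : Fin (m + 1) → ℝ} (hθ : ∀ j, θ j ∈ Set.Icc 0 π)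
    (hθ' : ∀ j : Fin (m + 1), j.val ≠ 0 → θ j ≤ π / 2) (h : ∀ j, 2 * θ j ≤ ∑ i, θ i) :
    ∃ w : Fin (m + 1) → V, (∀ j, ‖w j‖ = 1) ∧ ∀ j, ⟪w j, w (j + 1)⟫ = cos (θ j) := by
  set θ' : ℕ → ℝ := fun k => θ (k + 1 : ℕ)
  have hval : ∀ k < m, ((k + 1 : ℕ) : Fin (m + 1)).val = k + 1 := fun k hk => by
    rw [Fin.val_natCast, Nat.mod_eq_of_lt (by omega)]
  have hsum : ∑ i, θ i = θ 0 + ∑ k ∈ range m, θ' k := by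
    rw [Fin.sum_univ_succ, ← Fin.sum_univ_eq_sum_range θ']
    congr 1
    exact sum_congr rfl fun i _ => congrArg θ (Fin.ext (by rw [hval i i.2, Fin.val_succ]))
  obtain ⟨v, hv, hedge, hclose⟩ := exists_chain_norm_eq_one_inner_eq_cos hV m
    (fun k hk => ⟨(hθ _).1, hθ' _ (by rw [hval k hk]; omega)⟩) (hθ 0)
    (by linarith [h 0]) (fun k _ => by linarith [h ((k + 1 : ℕ) : Fin (m + 1))])
  -- vertex `i` carries the vector `v (i - 1)` of the chain `1 → 2 → ⋯ → m → 0`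
  refine ⟨fun i => v (i + m : Fin (m + 1)).val, fun i => hv _, fun j => ?_⟩
  have hshift : j + 1 + (m : Fin (m + 1)) = j := by simp [add_assoc, add_comm (1 : Fin (m + 1))]
  show ⟪v (j + m : Fin (m + 1)).val, v (j + 1 + m : Fin (m + 1)).val⟫ = _
  rw [hshift]
  rcases eq_or_ne j 0 with rfl | hj
  · simpa [real_inner_comm] using hclose
  · have hj' : j.val ≠ 0 := Fin.val_ne_zero_iff.2 hj
    have hk : (j + m : Fin (m + 1)).val = j.val - 1 := by
      rw [Fin.val_add, Fin.val_natCast, Nat.mod_eq_of_lt m.lt_succ_self,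
        show j.val + m = j.val - 1 + (m + 1) by omega, Nat.add_mod_right,
        Nat.mod_eq_of_lt (by omega)]
    have := hedge (j.val - 1) (by omega)
    rwa [Nat.sub_add_cancel (Nat.one_le_iff_ne_zero.2 hj'), Fin.cast_val_eq_self, ← hk] at this

end InnerProductSpace

theorem mul_sup'_le_iff {ι : Type*} {s : Finset ι} (H : s.Nonempty) (f : ι → ℝ) {a c : ℝ}
    (ha : 0 < a) : a * s.sup' H f ≤ c ↔ ∀ i ∈ s, a * f i ≤ c := by
  simp_rw [← le_div_iff₀' ha, sup'_le_iff]

/-- Positive semi-definite completability of a `d`-cycle of correlations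
`cos θ₀, …, cos θ_{d-1}` (with all but possibly the first angle at most `π/2`):
a completion exists if and only if `2 max_j θ_j ≤ ∑ j θ_j`. -/
theorem stmt6 {d : ℕ} [NeZero d] (hd : 3 ≤ d) (θ : Fin d → ℝ)
    (hθ : ∀ j, θ j ∈ Set.Icc (0 : ℝ) Real.pi)
    (hθ' : ∀ j : Fin d, j.val ≠ 0 → θ j ≤ Real.pi / 2) :
    (∃ S : Matrix (Fin d) (Fin d) ℝ, S.PosSemidef ∧ (∀ i, S i i = 1) ∧
        ∀ j : Fin d, S j (j + 1) = Real.cos (θ j)) ↔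
      2 * (Finset.univ.sup' (Finset.univ_nonempty_iff.mpr ⟨⟨0, by omega⟩⟩) θ) ≤ ∑ j, θ j := by
  obtain ⟨m, rfl⟩ : ∃ m, d = m + 1 := ⟨d - 1, by omega⟩
  simp only [mul_sup'_le_iff _ _ two_pos, mem_univ, true_imp_iff]
  constructor
  · rintro ⟨S, hS, hdiag, hedge⟩ k
    obtain ⟨v, rfl⟩ := hS.exists_eq_gram
    have hv : ∀ j, ‖v j‖ = 1 := fun j => by
      rw [← pow_eq_one_iff_of_nonneg (norm_nonneg _) two_ne_zero, ← real_inner_self_eq_norm_sq]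
      exact hdiag j
    have hangle : ∀ j, angle (v j) (v (j + 1)) = θ j := fun j =>
      angle_eq_of_inner_eq_cos (hv j) (hv _) (hedge j) (hθ j).1 (hθ j).2
    calc 2 * θ k = 2 * angle (v k) (v (k + 1)) := by rw [hangle]
      _ ≤ ∑ j, angle (v j) (v (j + 1)) :=
        two_mul_angle_le_sum_angle_cycle (fun j => norm_ne_zero_iff.1 (by simp [hv j])) k
      _ = ∑ j, θ j := sum_congr rfl fun j _ => hangle j
  · intro h
    obtain ⟨w, hw, hedge⟩ :=
      exists_cycle_norm_eq_one_inner_eq_cos (V := EuclideanSpace ℝ (Fin 3)) (by simp) hθ hθ' h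
    exact ⟨gram ℝ w, posSemidef_gram ℝ w, fun i => by simp [hw], hedge⟩
end

section
/- Let P ∈ ℝ^{d×d} with ‖P‖₂ ≤ 1 and β ∈ [0,1]. The 3d×3d symmetric matrix M = [[I_d, P, −P],[Pᵀ, I_d, βI_d],[−Pᵀ, βI_d, I_d]] is positive semi-definite if and only if ‖P‖₂² ≤ (1−β)/2. -/
/-!
With `w = b - c` and `s = b + c`, the quadratic form of `M` at `(a, b, c)` is
`|a + P w|² - |P w|² + (1 - β)/2 |w|² + (1 + β)/2 |s|²`.
Taking `a = -P w` and `s = 0` shows that `M ⪰ 0` forces `|P w|² ≤ (1 - β)/2 |w|²` for all `w`;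
conversely, this bound makes every term except the perfect square nonnegative.
The bound for all `w` is exactly `‖P‖₂² ≤ (1 - β)/2`.
-/

open Matrix

/-- The `3d × 3d` block matrix `[[I, P, −P], [Pᵀ, I, βI], [−Pᵀ, βI, I]]`. -/
noncomputable def blockM {d : ℕ} (P : Matrix (Fin d) (Fin d) ℝ) (β : ℝ) :
    Matrix (Fin 3 × Fin d) (Fin 3 × Fin d) ℝ :=
  fun p q =>
    (![![1, P, -P],
       ![Pᵀ, 1, β • (1 : Matrix (Fin d) (Fin d) ℝ)],
       ![-Pᵀ, β • (1 : Matrix (Fin d) (Fin d) ℝ), 1]] p.1 q.1) p.2 q.2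

lemma EuclideanSpace.real_norm_sq_eq_dotProduct {n : Type*} [Fintype n] (x : EuclideanSpace ℝ n) :
    ‖x‖ ^ 2 = WithLp.ofLp x ⬝ᵥ WithLp.ofLp x := by
  rw [← real_inner_self_eq_norm_sq, EuclideanSpace.inner_eq_star_dotProduct, star_trivial]

lemma sq_specNorm_le_iff {d : ℕ} (A : Matrix (Fin d) (Fin d) ℝ) {r : ℝ} (hr : 0 ≤ r) :
    specNorm A ^ 2 ≤ r ↔ ∀ u, (A *ᵥ u) ⬝ᵥ (A *ᵥ u) ≤ r * (u ⬝ᵥ u) := by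
  rw [specNorm, ← Real.le_sqrt (norm_nonneg _) hr,
    ContinuousLinearMap.opNorm_le_iff (Real.sqrt_nonneg r),
    (WithLp.toLp_surjective (p := 2) (V := Fin d → ℝ)).forall]
  refine forall_congr' fun u => ?_
  rw [← sq_le_sq₀ (norm_nonneg _) (by positivity), mul_pow, Real.sq_sqrt hr,
    EuclideanSpace.real_norm_sq_eq_dotProduct, EuclideanSpace.real_norm_sq_eq_dotProduct]
  rfl

def blockVec {d : ℕ} (a b c : Fin d → ℝ) : Fin 3 × Fin d → ℝ := fun p => ![a, b, c] p.1 p.2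

lemma blockM_mulVec_blockVec {d : ℕ} (P : Matrix (Fin d) (Fin d) ℝ) (β : ℝ) (a b c : Fin d → ℝ) :
    blockM P β *ᵥ blockVec a b c =
      blockVec (a + P *ᵥ b - P *ᵥ c) (Pᵀ *ᵥ a + b + β • c) (-(Pᵀ *ᵥ a) + β • b + c) := by
  ext ⟨i, j⟩
  -- the `cons_val` simproc panics on the nested `![...]` of `blockM`; the plain lemmas suffice
  fin_cases i <;>
    simp [-cons_val, cons_val_zero, cons_val_one, cons_val_two, blockM, blockVec, mulVec,
      dotProduct, Fintype.sum_prod_type, Fin.sum_univ_three, one_apply, sub_eq_add_neg, mul_comm]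

lemma blockVec_dotProduct_blockVec {d : ℕ} (a b c a' b' c' : Fin d → ℝ) :
    blockVec a b c ⬝ᵥ blockVec a' b' c' = a ⬝ᵥ a' + b ⬝ᵥ b' + c ⬝ᵥ c' := by
  simp [blockVec, dotProduct, Fintype.sum_prod_type, Fin.sum_univ_three]

lemma blockVec_dotProduct_blockM_mulVec {d : ℕ} (P : Matrix (Fin d) (Fin d) ℝ) (β : ℝ)
    (a b c : Fin d → ℝ) :
    blockVec a b c ⬝ᵥ blockM P β *ᵥ blockVec a b c =
      (a + P *ᵥ (b - c)) ⬝ᵥ (a + P *ᵥ (b - c)) - (P *ᵥ (b - c)) ⬝ᵥ (P *ᵥ (b - c))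
        + (1 - β) / 2 * ((b - c) ⬝ᵥ (b - c)) + (1 + β) / 2 * ((b + c) ⬝ᵥ (b + c)) := by
  rw [blockM_mulVec_blockVec, blockVec_dotProduct_blockVec]
  simp only [dotProduct_add, add_dotProduct, dotProduct_sub, sub_dotProduct, dotProduct_neg,
    dotProduct_smul, smul_eq_mul, mulVec_sub, dotProduct_mulVec _ Pᵀ, vecMul_transpose]
  ring

lemma exists_blockVec_eq {d : ℕ} (x : Fin 3 × Fin d → ℝ) :
    ∃ a b c, blockVec a b c = x :=
  ⟨fun j => x (0, j), fun j => x (1, j), fun j => x (2, j), by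
    ext ⟨i, j⟩; fin_cases i <;> rfl⟩

lemma blockM_isHermitian {d : ℕ} (P : Matrix (Fin d) (Fin d) ℝ) (β : ℝ) :
    (blockM P β).IsHermitian := by
  ext ⟨i, j⟩ ⟨k, l⟩
  fin_cases i <;> fin_cases k <;>
    simp [-cons_val, cons_val_zero, cons_val_one, cons_val_two, blockM, one_apply, eq_comm]

lemma real_dotProduct_self_nonneg {n : Type*} [Fintype n] (v : n → ℝ) : 0 ≤ v ⬝ᵥ v :=
  dotProduct_self_star_nonneg v

lemma blockM_posSemidef_iff {d : ℕ} (P : Matrix (Fin d) (Fin d) ℝ) {β : ℝ} (hβ : -1 ≤ β) :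
    (blockM P β).PosSemidef ↔ ∀ u, (P *ᵥ u) ⬝ᵥ (P *ᵥ u) ≤ (1 - β) / 2 * (u ⬝ᵥ u) := by
  simp only [posSemidef_iff_dotProduct_mulVec, star_trivial, blockM_isHermitian, true_and]
  constructor
  · intro h u
    have hu := h (blockVec (-(P *ᵥ (u - -u))) u (-u))
    rw [blockVec_dotProduct_blockM_mulVec] at hu
    simp only [neg_add_cancel, add_neg_cancel, dotProduct_zero, sub_neg_eq_add,
      ← two_smul ℝ u, mulVec_smul, smul_dotProduct, dotProduct_smul, smul_eq_mul] at hu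
    linarith
  · intro h x
    obtain ⟨a, b, c, rfl⟩ := exists_blockVec_eq x
    rw [blockVec_dotProduct_blockM_mulVec]
    have hw := h (b - c)
    have hsq := real_dotProduct_self_nonneg (a + P *ᵥ (b - c))
    have hs := mul_nonneg (by linarith : (0 : ℝ) ≤ (1 + β) / 2) (real_dotProduct_self_nonneg (b + c))
    linarith

theorem stmt7_general {d : ℕ} (P : Matrix (Fin d) (Fin d) ℝ) (β : ℝ)
    (hβ : β ∈ Set.Icc (0 : ℝ) 1) :
    (blockM P β).PosSemidef ↔ specNorm P ^ 2 ≤ (1 - β) / 2 := by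
  rw [blockM_posSemidef_iff P (by linarith [hβ.1]), sq_specNorm_le_iff P (by linarith [hβ.2])]

/-- With `‖P‖₂ ≤ 1` and `β ∈ [0,1]`, the block matrix
`[[I, P, −P], [Pᵀ, I, βI], [−Pᵀ, βI, I]]` is positive semi-definite
if and only if `‖P‖₂² ≤ (1−β)/2`. -/
theorem stmt7 {d : ℕ} (P : Matrix (Fin d) (Fin d) ℝ) (β : ℝ)
    (hP : specNorm P ≤ 1) (hβ : β ∈ Set.Icc (0 : ℝ) 1) :
    (blockM P β).PosSemidef ↔ specNorm P ^ 2 ≤ (1 - β) / 2 :=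
  stmt7_general P β hβ
end

section
/- Let x, y ∈ ℝ^d, β ∈ [0,1], and P ∈ ℝ^{d×d}. Then the infimum over x, y ∈ ℝ^d of ‖x−y‖² + 2(1+β)xᵀy − ‖P(x−y)‖² equals the infimum over t ≥ 0 of ((1−β)/2 − ‖P‖₂²)·t². In particular, the quadratic form (x,y) ↦ ‖x−y‖² + 2(1+β)xᵀy − ‖P(x−y)‖² is nonnegative on ℝ^d × ℝ^d if and only if ‖P‖₂² ≤ (1−β)/2. -/
/-!
Completing the square, `‖x - y‖² + 2(1 + β)⟪x, y⟫ = (1 + β)/2 ‖x + y‖² + (1 - β)/2 ‖x - y‖²`,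
so the form is nonnegative iff `‖P u‖² ≤ (1 - β)/2 ‖u‖²` for all `u` (test `y = -x`), i.e.
iff `‖P‖² ≤ (1 - β)/2`. Both infima are of functions homogeneous of degree two, hence are
either `0`, attained at the origin, or `-∞`; Lean's real `⨅` also returns `0` in the
second case, so both sides are always `0`.
-/

open Filter Set

theorem Real.iInf_eq_zero_of_forall_exists_eq_sq_mul {ι : Type*} [Nonempty ι] (f : ι → ℝ)
    (hf : ∀ i (s : ℝ), ∃ j, f j = s ^ 2 * f i) : ⨅ i, f i = 0 := by
  obtain ⟨i₀⟩ := ‹Nonempty ι›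
  obtain ⟨j₀, hj₀⟩ := hf i₀ 0
  rw [zero_pow two_ne_zero, zero_mul] at hj₀
  rcases forall_or_exists_not (fun i => 0 ≤ f i) with hnonneg | ⟨i, hi⟩
  · exact le_antisymm (hj₀ ▸ ciInf_le ⟨0, forall_mem_range.2 hnonneg⟩ j₀) (le_ciInf hnonneg)
  · rw [not_le] at hi
    have hunbdd : ¬ BddBelow (range fun s : ℝ => s ^ 2 * f i) :=
      not_bddBelow_of_tendsto_atBot ((tendsto_pow_atTop two_ne_zero).atTop_mul_const_of_neg hi)
    refine Real.iInf_of_not_bddBelow fun hbdd => hunbdd (hbdd.mono ?_)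
    rintro _ ⟨s, rfl⟩
    exact hf i s

theorem ContinuousLinearMap.opNorm_sq_le_iff {E F : Type*} [SeminormedAddCommGroup E]
    [SeminormedAddCommGroup F] [NormedSpace ℝ E] [NormedSpace ℝ F] (L : E →L[ℝ] F) {c : ℝ}
    (hc : 0 ≤ c) : ‖L‖ ^ 2 ≤ c ↔ ∀ u, ‖L u‖ ^ 2 ≤ c * ‖u‖ ^ 2 := by
  rw [← Real.le_sqrt (norm_nonneg L) hc, L.opNorm_le_iff (Real.sqrt_nonneg c)]
  refine forall_congr' fun u => ?_
  rw [← Real.sqrt_sq (norm_nonneg u), ← Real.sqrt_mul hc, Real.sqrt_sq (norm_nonneg u),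
    Real.le_sqrt (norm_nonneg _) (by positivity)]

section QuadraticForm

variable {E F : Type*} [NormedAddCommGroup E] [InnerProductSpace ℝ E]
  [SeminormedAddCommGroup F] [NormedSpace ℝ F]

theorem norm_sub_sq_add_mul_inner (β : ℝ) (x y : E) :
    ‖x - y‖ ^ 2 + 2 * (1 + β) * inner ℝ x y
      = (1 + β) / 2 * ‖x + y‖ ^ 2 + (1 - β) / 2 * ‖x - y‖ ^ 2 := by
  rw [norm_add_sq_real, norm_sub_sq_real]
  ring

theorem norm_sub_sq_add_mul_inner_sub_norm_apply_sq_smul (β : ℝ) (L : E →L[ℝ] F) (s : ℝ)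
    (x y : E) :
    ‖s • x - s • y‖ ^ 2 + 2 * (1 + β) * inner ℝ (s • x) (s • y) - ‖L (s • x - s • y)‖ ^ 2
      = s ^ 2 * (‖x - y‖ ^ 2 + 2 * (1 + β) * inner ℝ x y - ‖L (x - y)‖ ^ 2) := by
  rw [← smul_sub, map_smul, norm_smul, norm_smul, real_inner_smul_left, real_inner_smul_right,
    mul_pow, mul_pow, Real.norm_eq_abs, sq_abs]
  ring

theorem norm_sub_sq_add_mul_inner_sub_norm_apply_sq_neg (β : ℝ) (L : E →L[ℝ] F) (u : E) :
    ‖u - -u‖ ^ 2 + 2 * (1 + β) * inner ℝ u (-u) - ‖L (u - -u)‖ ^ 2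
      = 4 * ((1 - β) / 2 * ‖u‖ ^ 2 - ‖L u‖ ^ 2) := by
  rw [sub_neg_eq_add, ← two_smul ℝ u, map_smul, norm_smul, norm_smul, inner_neg_right,
    real_inner_self_eq_norm_sq, Real.norm_two]
  ring

theorem nonneg_norm_sub_sq_add_mul_inner_sub_norm_apply_sq_iff {β : ℝ} (hβ : β ∈ Icc (-1) 1)
    (L : E →L[ℝ] F) :
    (∀ x y : E, 0 ≤ ‖x - y‖ ^ 2 + 2 * (1 + β) * inner ℝ x y - ‖L (x - y)‖ ^ 2) ↔
      ‖L‖ ^ 2 ≤ (1 - β) / 2 := by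
  rw [L.opNorm_sq_le_iff (by linarith [hβ.2])]
  constructor
  · intro h u
    have := h u (-u)
    rw [norm_sub_sq_add_mul_inner_sub_norm_apply_sq_neg] at this
    linarith
  · intro h x y
    rw [norm_sub_sq_add_mul_inner]
    nlinarith [h (x - y), sq_nonneg ‖x + y‖, hβ.1]

end QuadraticForm

/-- The quadratic form `(x,y) ↦ ‖x−y‖² + 2(1+β)⟪x,y⟫ − ‖P(x−y)‖²` has infimum equal to
`inf_{t ≥ 0} ((1−β)/2 − ‖P‖₂²) t²`, and is nonnegative iff `‖P‖₂² ≤ (1−β)/2`. -/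
theorem stmt8 {d : ℕ} (β : ℝ) (hβ : β ∈ Set.Icc (0 : ℝ) 1)
    (P : Matrix (Fin d) (Fin d) ℝ) :
    (⨅ p : EuclideanSpace ℝ (Fin d) × EuclideanSpace ℝ (Fin d),
        (‖p.1 - p.2‖ ^ 2 + 2 * (1 + β) * (inner ℝ p.1 p.2 : ℝ)
          - ‖Matrix.toEuclideanCLM (𝕜 := ℝ) P (p.1 - p.2)‖ ^ 2)
      = ⨅ t : {t : ℝ // 0 ≤ t}, ((1 - β) / 2 - specNorm P ^ 2) * (t : ℝ) ^ 2) ∧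
    ((∀ x y : EuclideanSpace ℝ (Fin d),
        0 ≤ ‖x - y‖ ^ 2 + 2 * (1 + β) * (inner ℝ x y : ℝ)
          - ‖Matrix.toEuclideanCLM (𝕜 := ℝ) P (x - y)‖ ^ 2) ↔
      specNorm P ^ 2 ≤ (1 - β) / 2) := by
  refine ⟨?_, nonneg_norm_sub_sq_add_mul_inner_sub_norm_apply_sq_iff
    ⟨by linarith [hβ.1], hβ.2⟩ _⟩
  rw [Real.iInf_eq_zero_of_forall_exists_eq_sq_mul, Real.iInf_eq_zero_of_forall_exists_eq_sq_mul]
  · rintro t s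
    refine ⟨⟨|s| * t, mul_nonneg (abs_nonneg s) t.2⟩, ?_⟩
    rw [mul_pow, sq_abs]
    ring
  · rintro ⟨x, y⟩ s
    exact ⟨(s • x, s • y), norm_sub_sq_add_mul_inner_sub_norm_apply_sq_smul β _ s x y⟩
end

section
/- Let A₁, ..., A_n be m×m real symmetric matrices. The system x₁A₁ + ⋯ + x_nA_n ≻ 0 has no solution (x₁,...,x_n) ∈ ℝⁿ if and only if there exists a nonzero symmetric positive semi-definite m×m matrix Y with ⟨A_i, Y⟩ = 0 for all i ∈ [n], where ⟨A, Y⟩ = tr(AY). -/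
/-!
If no combination `∑ xᵢ Aᵢ` is positive definite, the span `V` of the `Aᵢ` misses the open
convex cone of matrices with positive quadratic form. Hahn–Banach yields a linear functional
vanishing on `V` and positive on that cone; through the trace pairing it is a symmetric matrix
`Y` with `⟨Aᵢ, Y⟩ = 0` and `⟨1, Y⟩ > 0`, and `xᵀ Y x = ⟨x xᵀ, Y⟩ ≥ 0` because `x xᵀ + ε 1` lies
in the cone. Conversely, `⟨M, Y⟩ = tr (√M Y √M) > 0` whenever `M ≻ 0` and `0 ≠ Y ⪰ 0`.
-/

open Matrix

theorem geometric_hahn_banach_open_submodule {E : Type*} [TopologicalSpace E] [AddCommGroup E]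
    [Module ℝ E] [IsTopologicalAddGroup E] [ContinuousSMul ℝ E] {s : Set E}
    (hs₁ : Convex ℝ s) (hs₂ : IsOpen s) (V : Submodule ℝ E) (disj : Disjoint s V) :
    ∃ f : StrongDual ℝ E, (∀ x ∈ s, 0 < f x) ∧ ∀ x ∈ V, f x = 0 := by
  obtain ⟨f, u, hfs, hfV⟩ := geometric_hahn_banach_open hs₁ hs₂ V.convex disj
  have hf_V : ∀ x ∈ V, f x = 0 := by
    intro x hx
    by_contra hfx
    have := hfV _ (V.smul_mem ((u - 1) / f x) hx)
    rw [map_smul, smul_eq_mul, div_mul_cancel₀ _ hfx] at this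
    linarith
  have hu : u ≤ 0 := by simpa using hfV 0 V.zero_mem
  exact ⟨-f, fun x hx => by simpa using (hfs x hx).trans_le hu, fun x hx => by simp [hf_V x hx]⟩

namespace Matrix

variable {ι : Type*} [Fintype ι]

variable (ι) in
/-- Unlike `PosDef`, membership does not require symmetry, so this cone is open in the space of
all matrices. -/
def quadPosCone : ConvexCone ℝ (Matrix ι ι ℝ) where
  carrier := {M | ∀ x, x ≠ 0 → 0 < x ⬝ᵥ M *ᵥ x}
  smul_mem' c hc M hM x hx := by
    simpa [smul_mulVec] using mul_pos hc (hM x hx)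
  add_mem' M hM N hN x hx := by
    simpa [add_mulVec, dotProduct_add] using add_pos (hM x hx) (hN x hx)

theorem isOpen_quadPosCone : IsOpen (quadPosCone ι : Set (Matrix ι ι ℝ)) := by
  have hsphere : (quadPosCone ι : Set (Matrix ι ι ℝ)) =
      {M | ∀ x ∈ Metric.sphere (0 : ι → ℝ) 1, 0 < x ⬝ᵥ M *ᵥ x} := by
    ext M
    refine ⟨fun hM x hx => hM x (ne_zero_of_mem_unit_sphere ⟨x, hx⟩), fun hM x hx => ?_⟩
    have hx' : 0 < ‖x‖ := norm_pos_iff.2 hx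
    have := hM (‖x‖⁻¹ • x) (by simp [norm_smul, hx'.ne'])
    simp only [mulVec_smul, dotProduct_smul, smul_dotProduct, smul_eq_mul, ← mul_assoc] at this
    exact (mul_pos_iff_of_pos_left (by positivity)).1 this
  rw [hsphere, isOpen_iff_eventually]
  intro M₀ hM₀
  refine (isCompact_sphere 0 1).eventually_forall_of_forall_eventually fun x hx => ?_
  have hcont : Continuous fun p : Matrix ι ι ℝ × (ι → ℝ) => p.2 ⬝ᵥ p.1 *ᵥ p.2 := by fun_prop
  exact continuousAt_const.eventually_lt (hcont.continuousAt (x := (M₀, x))) (hM₀ x hx)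

theorem PosDef.mem_quadPosCone {M : Matrix ι ι ℝ} (hM : M.PosDef) : M ∈ quadPosCone ι :=
  fun x hx => by simpa using hM.dotProduct_mulVec_pos hx

theorem IsSymm.mem_quadPosCone_iff {M : Matrix ι ι ℝ} (hM : M.IsSymm) :
    M ∈ quadPosCone ι ↔ M.PosDef :=
  ⟨fun h => .of_dotProduct_mulVec_pos (isHermitian_iff_isSymm.2 hM) fun x hx => by
    simpa using h x hx, PosDef.mem_quadPosCone⟩

theorem exists_trace_mul_eq [DecidableEq ι] (g : Matrix ι ι ℝ →ₗ[ℝ] ℝ) :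
    ∃ G : Matrix ι ι ℝ, ∀ M, trace (M * G) = g M := by
  refine ⟨of fun i j => g (single j i 1), fun M => ?_⟩
  conv_rhs => rw [matrix_eq_sum_single M]
  simp only [map_sum, trace, diag, mul_apply, of_apply]
  refine Finset.sum_congr rfl fun i _ => Finset.sum_congr rfl fun j _ => ?_
  rw [← smul_eq_mul, ← g.map_smul, smul_single, smul_eq_mul, mul_one]

theorem exists_isSymm_trace_mul_eq [DecidableEq ι] (g : Matrix ι ι ℝ →ₗ[ℝ] ℝ) :
    ∃ Y : Matrix ι ι ℝ, Y.IsSymm ∧ ∀ M, M.IsSymm → trace (M * Y) = g M := by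
  obtain ⟨G, hG⟩ := exists_trace_mul_eq g
  refine ⟨(1 / 2 : ℝ) • (G + Gᵀ), (isSymm_add_transpose_self G).smul _, fun M hM => ?_⟩
  have hGt : trace (M * Gᵀ) = trace (M * G) := by
    rw [← trace_transpose, transpose_mul, transpose_transpose, hM.eq, trace_mul_comm]
  rw [mul_smul_comm, mul_add, trace_smul, trace_add, hGt, hG, smul_eq_mul]
  ring

open scoped MatrixOrder ComplexOrder in
theorem PosDef.trace_mul_pos [DecidableEq ι] {𝕜 : Type*} [RCLike 𝕜] {M Y : Matrix ι ι 𝕜}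
    (hM : M.PosDef) (hY : Y.PosSemidef) (hY0 : Y ≠ 0) : 0 < trace (M * Y) := by
  set P := CFC.sqrt M
  have hP : IsUnit P :=
    CFC.isUnit_sqrt_iff_isStrictlyPositive.2 (isStrictlyPositive_iff_posDef.2 hM)
  have hPP : P * P = M := CFC.sqrt_mul_sqrt_self M hM.posSemidef.nonneg
  have hPh : Pᴴ = P := (CFC.sqrt_nonneg M).posSemidef.isHermitian
  have htrace : trace (M * Y) = trace (P * Y * Pᴴ) := by
    rw [hPh, ← hPP, mul_assoc, trace_mul_comm, mul_assoc]
  have hPYP := hY.mul_mul_conjTranspose_same P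
  rw [htrace]
  refine hPYP.trace_nonneg.lt_of_ne' fun h => hY0 ?_
  rwa [hPYP.trace_eq_zero_iff, hPh, hP.mul_left_eq_zero, hP.mul_right_eq_zero] at h

theorem PosSemidef.nonneg_of_pos_on_quadPosCone [DecidableEq ι] {g : Matrix ι ι ℝ →ₗ[ℝ] ℝ}
    (hg : ∀ M ∈ quadPosCone ι, 0 < g M) {M : Matrix ι ι ℝ} (hM : M.PosSemidef) : 0 ≤ g M := by
  have hg_one : 0 < g 1 := hg 1 PosDef.one.mem_quadPosCone
  refine le_of_forall_pos_lt_add fun δ hδ => ?_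
  have := hg _ ((PosDef.one.smul (div_pos hδ hg_one)).posSemidef_add hM).mem_quadPosCone
  rw [map_add, map_smul, smul_eq_mul, div_mul_cancel₀ _ hg_one.ne'] at this
  linarith

theorem exists_posSemidef_trace_mul_eq_zero [DecidableEq ι] (V : Submodule ℝ (Matrix ι ι ℝ))
    (hV : ∀ M ∈ V, M.IsSymm) (h : ∀ M ∈ V, ¬ M.PosDef) :
    ∃ Y : Matrix ι ι ℝ, Y ≠ 0 ∧ Y.PosSemidef ∧ ∀ M ∈ V, trace (M * Y) = 0 := by
  have disj : Disjoint (quadPosCone ι : Set (Matrix ι ι ℝ)) V :=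
    Set.disjoint_left.2 fun M hM hMV => h M hMV ((hV M hMV).mem_quadPosCone_iff.1 hM)
  obtain ⟨g, hg_pos, hg_V⟩ :=
    geometric_hahn_banach_open_submodule (quadPosCone ι).convex isOpen_quadPosCone V disj
  obtain ⟨Y, hY_symm, hY⟩ := exists_isSymm_trace_mul_eq (g : Matrix ι ι ℝ →ₗ[ℝ] ℝ)
  refine ⟨Y, ?_, ?_, fun M hM => (hY M (hV M hM)).trans (hg_V M hM)⟩
  · rintro rfl
    have := hY 1 isSymm_one
    rw [mul_zero, trace_zero] at this
    exact (hg_pos 1 PosDef.one.mem_quadPosCone).ne this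
  · refine .of_dotProduct_mulVec_nonneg (isHermitian_iff_isSymm.2 hY_symm) fun x => ?_
    have hxx := posSemidef_vecMulVec_self_star x
    rw [star_trivial] at hxx ⊢
    rw [dotProduct_mulVec, dotProduct_comm, ← trace_vecMulVec, ← vecMulVec_mul,
      hY _ (isHermitian_iff_isSymm.1 hxx.isHermitian)]
    exact hxx.nonneg_of_pos_on_quadPosCone (g := (g : Matrix ι ι ℝ →ₗ[ℝ] ℝ)) hg_pos

theorem not_exists_posDef_mem_iff [DecidableEq ι] (V : Submodule ℝ (Matrix ι ι ℝ))
    (hV : ∀ M ∈ V, M.IsSymm) :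
    (¬ ∃ M ∈ V, M.PosDef) ↔
      ∃ Y : Matrix ι ι ℝ, Y ≠ 0 ∧ Y.PosSemidef ∧ ∀ M ∈ V, trace (M * Y) = 0 := by
  refine ⟨fun h => exists_posSemidef_trace_mul_eq_zero V hV fun M hM hPD => h ⟨M, hM, hPD⟩, ?_⟩
  rintro ⟨Y, hY0, hY, hYV⟩ ⟨M, hMV, hM⟩
  exact (hM.trace_mul_pos hY hY0).ne' (hYV M hMV)

end Matrix

/-- Farkas' lemma for semi-definite programming: the system
`x₁ A₁ + ⋯ + xₙ Aₙ ≻ 0` has no solution iff there is a nonzero positive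
semi-definite `Y` with `⟨Aᵢ, Y⟩ = 0` for all `i`. -/
theorem stmt9 {m n : ℕ} (A : Fin n → Matrix (Fin m) (Fin m) ℝ)
    (hA : ∀ i, (A i).IsSymm) :
    (¬ ∃ x : Fin n → ℝ, (∑ i, x i • A i).PosDef) ↔
      ∃ Y : Matrix (Fin m) (Fin m) ℝ, Y ≠ 0 ∧ Y.PosSemidef ∧
        ∀ i, (A i * Y).trace = 0 := by
  set V := Submodule.span ℝ (Set.range A)
  have hV : ∀ M ∈ V, M.IsSymm := fun M hM => by
    induction hM using Submodule.span_induction with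
    | mem M hM => obtain ⟨i, rfl⟩ := hM; exact hA i
    | zero => exact isSymm_zero
    | add M N _ _ hM hN => exact hM.add hN
    | smul c M _ hM => exact hM.smul c
  have hPD : (∃ x : Fin n → ℝ, (∑ i, x i • A i).PosDef) ↔ ∃ M ∈ V, M.PosDef := by
    simp only [V, Submodule.mem_span_range_iff_exists_fun]
    exact ⟨fun ⟨x, hx⟩ => ⟨_, ⟨x, rfl⟩, hx⟩, fun ⟨_, ⟨x, rfl⟩, hx⟩ => ⟨x, hx⟩⟩
  have htrace (Y : Matrix (Fin m) (Fin m) ℝ) :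
      (∀ i, (A i * Y).trace = 0) ↔ ∀ M ∈ V, (M * Y).trace = 0 := by
    refine ⟨fun h M hM => ?_, fun h i => h _ (Submodule.subset_span ⟨i, rfl⟩)⟩
    obtain ⟨x, rfl⟩ := (Submodule.mem_span_range_iff_exists_fun ℝ).1 hM
    simp [Finset.sum_mul, trace_sum, h]
  simp only [hPD, htrace]
  exact not_exists_posDef_mem_iff V hV
end

section
/- Let S be a finite collection of nonempty subsets of [d], and for each j ∈ [d] let S_j = {S ∈ 𝕊 : j ∈ S} be nonempty. Let σ²_𝕊 = (σ²_{S,j})_{S∈𝕊, j∈S} be nonnegative reals satisfying |𝕊_j|⁻¹ Σ_{S ∈ 𝕊_j} σ²_{S,j} = 1 for all j ∈ [d]. Define V(σ²_𝕊) = 1 − min_j min_{S∈𝕊_j} σ²_{S,j}. Then V(σ²_𝕊) equals the infimum over ε ∈ [0,1] such that σ²_{S,j} = (1−ε)·1 + ε·σ'²_{S,j} for some nonnegative σ'²_𝕊 satisfying the same averaging constraint |𝕊_j|⁻¹ Σ_{S ∈ 𝕊_j} σ'²_{S,j} = 1 for all j. -/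
/-! If `σ² = (1 - ε) + ε σ'²` with `σ'² ≥ 0`, then every `σ²_{S,j}` is at least `1 - ε`, so
`1 - ε ≤ m := min σ²`. Conversely `ε = 1 - m` is attained by `σ'² = (σ² - m) / (1 - m)`:
it is nonnegative, and it still averages to `1` because the affine map `x ↦ (x - m) / (1 - m)`
fixes `1`. When `m = 1`, all variances are `≥ 1` with average `1`, hence all equal `1`, and
`ε = 0` works. -/

open Finset

section UnitAverage

variable {ι : Type*} {s : Finset ι} {f : ι → ℝ}

lemma card_ne_zero_of_sum_div_card_eq_one (h : (∑ i ∈ s, f i) / #s = 1) : #s ≠ 0 :=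
  fun h0 => by simp [h0] at h

lemma sum_eq_card_of_sum_div_card_eq_one (h : (∑ i ∈ s, f i) / #s = 1) :
    ∑ i ∈ s, f i = #s :=
  (div_eq_one_iff_eq (Nat.cast_ne_zero.mpr (card_ne_zero_of_sum_div_card_eq_one h))).mp h

lemma exists_le_one_of_sum_div_card_eq_one (h : (∑ i ∈ s, f i) / #s = 1) :
    ∃ i ∈ s, f i ≤ 1 :=
  exists_le_of_sum_le (card_ne_zero.mp (card_ne_zero_of_sum_div_card_eq_one h))
    (by simp [sum_eq_card_of_sum_div_card_eq_one h])

lemma eq_one_of_one_le_of_sum_div_card_eq_one (h : (∑ i ∈ s, f i) / #s = 1)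
    (h1 : ∀ i ∈ s, 1 ≤ f i) : ∀ i ∈ s, f i = 1 := fun i hi =>
  ((sum_eq_sum_iff_of_le h1).mp (by simp [sum_eq_card_of_sum_div_card_eq_one h]) i hi).symm

lemma sum_sub_div_one_sub_div_card_eq_one (h : (∑ i ∈ s, f i) / #s = 1) {m : ℝ} (hm : m ≠ 1) :
    (∑ i ∈ s, (f i - m) / (1 - m)) / #s = 1 := by
  rw [← sum_div, sum_sub_distrib, sum_const, nsmul_eq_mul,
    sum_eq_card_of_sum_div_card_eq_one h]
  field_simp [sub_ne_zero.mpr hm.symm, card_ne_zero_of_sum_div_card_eq_one h]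

end UnitAverage

section MixtureWeights

variable {α : Type*} [DecidableEq α] (𝕊 : Finset (Finset α))

def HasUnitAverages (τ : Finset α → α → ℝ) : Prop :=
  ∀ j : α, (∑ S ∈ 𝕊.filter (fun S => j ∈ S), τ S j) /
    ((𝕊.filter (fun S => j ∈ S)).card : ℝ) = 1

def IsNonnegOn (τ : Finset α → α → ℝ) : Prop :=
  ∀ S ∈ 𝕊, ∀ j ∈ S, 0 ≤ τ S j

def incidenceValues (σ2 : Finset α → α → ℝ) : Set ℝ :=
  {x | ∃ S ∈ 𝕊, ∃ j ∈ S, σ2 S j = x}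

def mixtureWeights (σ2 : Finset α → α → ℝ) : Set ℝ :=
  {ε | ε ∈ Set.Icc (0 : ℝ) 1 ∧ ∃ σ2' : Finset α → α → ℝ, IsNonnegOn 𝕊 σ2' ∧
    HasUnitAverages 𝕊 σ2' ∧ ∀ S ∈ 𝕊, ∀ j ∈ S, σ2 S j = (1 - ε) * 1 + ε * σ2' S j}

variable {𝕊} {σ2 : Finset α → α → ℝ} {m : ℝ}

lemma one_sub_le_of_mem_mixtureWeights (hm : IsGLB (incidenceValues 𝕊 σ2) m) {ε : ℝ}
    (hε : ε ∈ mixtureWeights 𝕊 σ2) : 1 - ε ≤ m := by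
  obtain ⟨⟨hε0, -⟩, σ2', hnn', -, hmix⟩ := hε
  refine hm.2 ?_
  rintro _ ⟨S, hS, j, hj, rfl⟩
  have := mul_nonneg hε0 (hnn' S hS j hj)
  linarith [hmix S hS j hj]

lemma le_one_of_isGLB_incidenceValues (havg : HasUnitAverages 𝕊 σ2)
    (hm : IsGLB (incidenceValues 𝕊 σ2) m) : m ≤ 1 := by
  obtain ⟨_, S, hS, j, hj, rfl⟩ := hm.nonempty
  obtain ⟨T, hT, hT1⟩ := exists_le_one_of_sum_div_card_eq_one (havg j)
  obtain ⟨hT𝕊, hjT⟩ := mem_filter.mp hT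
  exact (hm.1 ⟨T, hT𝕊, j, hjT, rfl⟩).trans hT1

lemma one_sub_mem_mixtureWeights (hnn : IsNonnegOn 𝕊 σ2) (havg : HasUnitAverages 𝕊 σ2)
    (hm : IsGLB (incidenceValues 𝕊 σ2) m) : 1 - m ∈ mixtureWeights 𝕊 σ2 := by
  have hle : ∀ S ∈ 𝕊, ∀ j ∈ S, m ≤ σ2 S j := fun S hS j hj => hm.1 ⟨S, hS, j, hj, rfl⟩
  have hm0 : 0 ≤ m := hm.2 (by rintro _ ⟨S, hS, j, hj, rfl⟩; exact hnn S hS j hj)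
  have hm1 := le_one_of_isGLB_incidenceValues havg hm
  refine ⟨⟨by linarith, by linarith⟩, ?_⟩
  rcases hm1.eq_or_lt with rfl | hlt
  · refine ⟨σ2, hnn, havg, fun S hS j hj => ?_⟩
    have := eq_one_of_one_le_of_sum_div_card_eq_one (havg j)
      (fun T hT => hle T (mem_filter.mp hT).1 j (mem_filter.mp hT).2) S (mem_filter.mpr ⟨hS, hj⟩)
    simp [this]
  · refine ⟨fun S j => (σ2 S j - m) / (1 - m), fun S hS j hj => ?_,
      fun j => sum_sub_div_one_sub_div_card_eq_one (havg j) hlt.ne, fun S hS j hj => ?_⟩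
    · exact div_nonneg (sub_nonneg.mpr (hle S hS j hj)) (sub_nonneg.mpr hm1)
    · field_simp [(sub_pos.mpr hlt).ne']
      ring

theorem isLeast_mixtureWeights (hnn : IsNonnegOn 𝕊 σ2) (havg : HasUnitAverages 𝕊 σ2)
    (hm : IsGLB (incidenceValues 𝕊 σ2) m) : IsLeast (mixtureWeights 𝕊 σ2) (1 - m) :=
  ⟨one_sub_mem_mixtureWeights hnn havg hm, fun _ hε => by
    linarith [one_sub_le_of_mem_mixtureWeights hm hε]⟩

lemma isGLB_incidenceValues_inf' [Fintype α] (hα : (univ : Finset α).Nonempty)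
    (hfib : ∀ j : α, (𝕊.filter (fun S => j ∈ S)).Nonempty) :
    IsGLB (incidenceValues 𝕊 σ2)
      (univ.inf' hα fun j => (𝕊.filter (fun S => j ∈ S)).inf' (hfib j) fun S => σ2 S j) := by
  refine ⟨?_, fun b hb => le_inf' _ _ fun j _ => le_inf' _ _ fun S hS => ?_⟩
  · rintro _ ⟨S, hS, j, hj, rfl⟩
    exact (inf'_le _ (mem_univ j)).trans (inf'_le _ (mem_filter.mpr ⟨hS, hj⟩))
  · exact hb ⟨S, (mem_filter.mp hS).1, j, (mem_filter.mp hS).2, rfl⟩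

end MixtureWeights

theorem stmt10_general {d : ℕ} (hd : 0 < d) (𝕊 : Finset (Finset (Fin d)))
    (hSj : ∀ j : Fin d, (𝕊.filter (fun S => j ∈ S)).Nonempty)
    (σ2 : Finset (Fin d) → Fin d → ℝ)
    (hnn : ∀ S ∈ 𝕊, ∀ j ∈ S, 0 ≤ σ2 S j)
    (havg : ∀ j : Fin d,
      (∑ S ∈ 𝕊.filter (fun S => j ∈ S), σ2 S j) /
        ((𝕊.filter (fun S => j ∈ S)).card : ℝ) = 1) :
    1 - (Finset.univ.inf' (Finset.univ_nonempty_iff.mpr ⟨⟨0, hd⟩⟩) fun j =>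
          (𝕊.filter (fun S => j ∈ S)).inf' (hSj j) fun S => σ2 S j)
      = sInf {ε : ℝ | ε ∈ Set.Icc (0 : ℝ) 1 ∧
          ∃ σ2' : Finset (Fin d) → Fin d → ℝ,
            (∀ S ∈ 𝕊, ∀ j ∈ S, 0 ≤ σ2' S j) ∧
            (∀ j : Fin d,
              (∑ S ∈ 𝕊.filter (fun S => j ∈ S), σ2' S j) /
                ((𝕊.filter (fun S => j ∈ S)).card : ℝ) = 1) ∧
            ∀ S ∈ 𝕊, ∀ j ∈ S, σ2 S j = (1 - ε) * 1 + ε * σ2' S j} :=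
  ((isLeast_mixtureWeights hnn havg (isGLB_incidenceValues_inf' _ hSj)).csInf_eq).symm

/-- Dual representation of the inconsistency measure `V(σ²_𝕊)`: if the per-coordinate
average variance is normalised to `1`, then `1 − min_j min_{S ∋ j} σ²_{S,j}` equals
the least `ε ∈ [0,1]` such that `σ²_𝕊 = (1−ε)·𝟙 + ε·σ'²_𝕊` for some nonnegative `σ'²_𝕊`
satisfying the same averaging constraint. -/
theorem stmt10 {d : ℕ} (hd : 0 < d) (𝕊 : Finset (Finset (Fin d)))
    (hne : ∀ S ∈ 𝕊, S.Nonempty)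
    (hSj : ∀ j : Fin d, (𝕊.filter (fun S => j ∈ S)).Nonempty)
    (σ2 : Finset (Fin d) → Fin d → ℝ)
    (hnn : ∀ S ∈ 𝕊, ∀ j ∈ S, 0 ≤ σ2 S j)
    (havg : ∀ j : Fin d,
      (∑ S ∈ 𝕊.filter (fun S => j ∈ S), σ2 S j) /
        ((𝕊.filter (fun S => j ∈ S)).card : ℝ) = 1) :
    1 - (Finset.univ.inf' (Finset.univ_nonempty_iff.mpr ⟨⟨0, hd⟩⟩) fun j =>
          (𝕊.filter (fun S => j ∈ S)).inf' (hSj j) fun S => σ2 S j)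
      = sInf {ε : ℝ | ε ∈ Set.Icc (0 : ℝ) 1 ∧
          ∃ σ2' : Finset (Fin d) → Fin d → ℝ,
            (∀ S ∈ 𝕊, ∀ j ∈ S, 0 ≤ σ2' S j) ∧
            (∀ j : Fin d,
              (∑ S ∈ 𝕊.filter (fun S => j ∈ S), σ2' S j) /
                ((𝕊.filter (fun S => j ∈ S)).card : ℝ) = 1) ∧
            ∀ S ∈ 𝕊, ∀ j ∈ S, σ2 S j = (1 - ε) * 1 + ε * σ2' S j} :=
  stmt10_general hd 𝕊 hSj σ2 hnn havg
end

section
/- Let 𝕊 be a finite collection of subsets of [d] and let Σ_𝕊 = (Σ_S : S ∈ 𝕊) be a sequence of positive semi-definite symmetric matrices (Σ_S of size |S|×|S|). Then there exists a d×d positive semi-definite symmetric matrix Σ with (Σ)_{jj'} = (Σ_S)_{jj'} for all S ∈ 𝕊 and all j, j' ∈ S, if and only if ⟨X_𝕊, Σ_𝕊⟩_𝕊 ≥ 0 for all sequences X_𝕊 of symmetric matrices satisfying A* X_𝕊 ⪰ 0. -/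
/-!
Conic duality. A completion is a matrix `M` in the positive semi-definite cone with `A M = Σ_𝕊`,
so the claim is Farkas' lemma for the cone `A(PSD)`, combined with self-duality of the PSD cone
(Schur's product theorem gives `∑ j k, X j k * M j k ≥ 0` for PSD `X`, `M`; rank-one matrices
`v vᵀ` give the converse). Farkas' lemma needs `A(PSD)` to be closed: on PSD matrices vanishing
off the indices covered by `𝕊`, `A` is injective (a PSD matrix with zero diagonal is zero), and a
linear map that is injective on a closed cone is bounded below on it, hence has closed image.
A separating family `X_𝕊` may be replaced by `X_𝕊 + X_𝕊ᵀ` because the `Σ_S` are symmetric.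
-/

open scoped RealInnerProductSpace
open Matrix

namespace PointedCone

variable {E F : Type*} [NormedAddCommGroup E] [NormedSpace ℝ E] [FiniteDimensional ℝ E]
  [NormedAddCommGroup F] [NormedSpace ℝ F]

theorem exists_pos_mul_norm_le_norm_map (K : PointedCone ℝ E) (hK : IsClosed (K : Set E))
    (f : E →ₗ[ℝ] F) (hf : ∀ x ∈ K, f x = 0 → x = 0) :
    ∃ c > 0, ∀ x ∈ K, c * ‖x‖ ≤ ‖f x‖ := by
  have hcomp : IsCompact ((K : Set E) ∩ Metric.sphere 0 1) :=
    (isCompact_sphere 0 1).inter_left hK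
  obtain ⟨c, hc, hcf⟩ := hcomp.exists_forall_le' (a := 0)
    f.continuous_of_finiteDimensional.norm.continuousOn fun x ⟨hxK, hx⟩ =>
      norm_pos_iff.mpr fun h0 => by simp [hf x hxK h0] at hx
  refine ⟨c, hc, fun x hxK => ?_⟩
  rcases eq_or_ne x 0 with rfl | hx
  · simp
  have hx' : 0 < ‖x‖ := norm_pos_iff.mpr hx
  have := hcf (‖x‖⁻¹ • x) ⟨K.smul_mem (by positivity) hxK, by simp [norm_smul, hx'.ne']⟩
  rw [map_smul, norm_smul, norm_inv, norm_norm] at this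
  rwa [le_inv_mul_iff₀ hx', mul_comm] at this

theorem isClosed_map (K : PointedCone ℝ E) (hK : IsClosed (K : Set E))
    (f : E →ₗ[ℝ] F) (hf : ∀ x ∈ K, f x = 0 → x = 0) : IsClosed (K.map f : Set F) := by
  obtain ⟨c, hc, hcf⟩ := K.exists_pos_mul_norm_le_norm_map hK f hf
  refine IsSeqClosed.isClosed fun {u b} hu hub => ?_
  choose x hxK hxu using hu
  replace hxu : ∀ n, f (x n) = u n := hxu
  obtain ⟨R, hR⟩ := hub.norm.bddAbove_range
  have hbdd : Bornology.IsBounded (Set.range x) := by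
    refine (Metric.isBounded_closedBall (x := (0 : E)) (r := R / c)).subset ?_
    rintro _ ⟨n, rfl⟩
    rw [mem_closedBall_zero_iff, le_div_iff₀ hc, mul_comm]
    exact (hcf _ (hxK n)).trans (by rw [hxu]; exact hR ⟨n, rfl⟩)
  obtain ⟨a, -, φ, hφ, hxa⟩ := tendsto_subseq_of_bounded hbdd fun n => ⟨n, rfl⟩
  refine ⟨a, hK.mem_of_tendsto hxa (.of_forall fun n => hxK _), tendsto_nhds_unique
    ((f.continuous_of_finiteDimensional.tendsto a).comp hxa) ?_⟩
  simpa only [Function.comp_def, hxu] using hub.comp hφ.tendsto_atTop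

end PointedCone

namespace Matrix

variable {ι : Type*} [Fintype ι]

theorem isClosed_setOf_posSemidef : IsClosed {M : Matrix ι ι ℝ | M.PosSemidef} := by
  simp only [posSemidef_iff_dotProduct_mulVec, Set.ofPred_and, Set.ofPred_forall]
  exact (isClosed_eq continuous_id.matrix_conjTranspose continuous_id).inter <|
    isClosed_iInter fun x => isClosed_le continuous_const <|
      continuous_const.dotProduct (continuous_id.matrix_mulVec continuous_const)

theorem PosSemidef.sum_mul_nonneg {A B : Matrix ι ι ℝ} (hA : A.PosSemidef) (hB : B.PosSemidef) :
    0 ≤ ∑ j, ∑ k, A j k * B j k := by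
  simpa [dotProduct, mulVec, Finset.sum_apply] using
    (hA.hadamard hB).dotProduct_mulVec_nonneg 1

theorem dotProduct_mulVec_eq_sum_mul_vecMulVec (A : Matrix ι ι ℝ) (v : ι → ℝ) :
    v ⬝ᵥ A *ᵥ v = ∑ j, ∑ k, A j k * vecMulVec v v j k := by
  simp only [dotProduct, mulVec, vecMulVec_apply, Finset.mul_sum]
  exact Finset.sum_congr rfl fun j _ => Finset.sum_congr rfl fun k _ => by ring

end Matrix

section Marginal

variable {ι : Type*} (𝕊 : Finset (Finset ι))

def marginalPairing (X Y : Finset ι → Matrix ι ι ℝ) : ℝ :=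
  ∑ S ∈ 𝕊, ∑ j ∈ S, ∑ k ∈ S, X S j k * Y S j k

variable {𝕊}

theorem marginalPairing_congr_right {X Y Y' : Finset ι → Matrix ι ι ℝ}
    (h : ∀ S ∈ 𝕊, ∀ j ∈ S, ∀ k ∈ S, Y S j k = Y' S j k) :
    marginalPairing 𝕊 X Y = marginalPairing 𝕊 X Y' :=
  Finset.sum_congr rfl fun S hS => Finset.sum_congr rfl fun j hj =>
    Finset.sum_congr rfl fun k hk => by rw [h S hS j hj k hk]

theorem marginalPairing_add_transpose {X Y : Finset ι → Matrix ι ι ℝ}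
    (hY : ∀ S ∈ 𝕊, ∀ j ∈ S, ∀ k ∈ S, Y S j k = Y S k j) :
    marginalPairing 𝕊 (fun S => X S + (X S)ᵀ) Y = 2 * marginalPairing 𝕊 X Y := by
  rw [marginalPairing, marginalPairing, Finset.mul_sum]
  refine Finset.sum_congr rfl fun S hS => ?_
  have hswap : ∑ j ∈ S, ∑ k ∈ S, X S k j * Y S j k = ∑ j ∈ S, ∑ k ∈ S, X S j k * Y S j k := by
    rw [Finset.sum_comm]
    exact Finset.sum_congr rfl fun j hj => Finset.sum_congr rfl fun k hk => by
      rw [hY S hS k hk j hj]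
  simp only [Matrix.add_apply, transpose_apply, add_mul, Finset.sum_add_distrib, hswap]
  ring

variable (𝕊) [DecidableEq ι]

def marginalAdjoint (X : Finset ι → Matrix ι ι ℝ) : Matrix ι ι ℝ :=
  of fun j k => ∑ S ∈ 𝕊.filter (fun S => j ∈ S ∧ k ∈ S), X S j k

/-- The blocks `Y S j k` (`j, k ∈ S ∈ 𝕊`) as a Euclidean vector indexed by `(S, j, k)`, zero off
the blocks; `marginalMap 𝕊` below is the marginalisation operator `A`. -/
def marginalVec (Y : Finset ι → Matrix ι ι ℝ) : EuclideanSpace ℝ (Finset ι × ι × ι) :=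
  WithLp.toLp 2 fun p => if p.1 ∈ 𝕊 ∧ p.2.1 ∈ p.1 ∧ p.2.2 ∈ p.1 then Y p.1 p.2.1 p.2.2 else 0

def marginalMap : Matrix ι ι ℝ →ₗ[ℝ] EuclideanSpace ℝ (Finset ι × ι × ι) where
  toFun M := marginalVec 𝕊 fun _ => M
  map_add' M N := by
    ext p
    simp only [marginalVec, PiLp.add_apply, Matrix.add_apply]
    split_ifs <;> simp
  map_smul' c M := by
    ext p
    simp only [marginalVec, PiLp.smul_apply, Matrix.smul_apply, RingHom.id_apply]
    split_ifs <;> simp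

def coveredPosSemidefCone : PointedCone ℝ (Matrix ι ι ℝ) where
  carrier := {M | M.PosSemidef ∧ ∀ j, ¬(∃ S ∈ 𝕊, j ∈ S) → M j j = 0}
  add_mem' hM hN := ⟨hM.1.add hN.1, fun j hj => by simp [hM.2 j hj, hN.2 j hj]⟩
  zero_mem' := ⟨PosSemidef.zero, fun _ _ => rfl⟩
  smul_mem' c M hM := ⟨hM.1.smul c.2, fun j hj => by simp [hM.2 j hj]⟩

variable {𝕊}

theorem marginalVec_apply_of_mem (Y : Finset ι → Matrix ι ι ℝ) {S : Finset ι} (hS : S ∈ 𝕊)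
    {j k : ι} (hj : j ∈ S) (hk : k ∈ S) : marginalVec 𝕊 Y (S, j, k) = Y S j k :=
  if_pos ⟨hS, hj, hk⟩

variable [Fintype ι]

theorem sum_marginalAdjoint_mul (X : Finset ι → Matrix ι ι ℝ) (M : Matrix ι ι ℝ) :
    ∑ j, ∑ k, marginalAdjoint 𝕊 X j k * M j k = marginalPairing 𝕊 X fun _ => M := by
  simp only [marginalAdjoint, marginalPairing, of_apply, Finset.sum_filter, Finset.sum_mul,
    ite_mul, zero_mul, ite_and]
  rw [Finset.sum_congr rfl fun j _ => Finset.sum_comm, Finset.sum_comm]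
  refine Finset.sum_congr rfl fun S _ => ?_
  simp only [Finset.sum_ite_irrel, Finset.sum_const_zero, Finset.sum_ite_mem, Finset.univ_inter]

theorem marginalPairing_nonneg {X : Finset ι → Matrix ι ι ℝ} {M : Matrix ι ι ℝ}
    (hX : (marginalAdjoint 𝕊 X).PosSemidef) (hM : M.PosSemidef) :
    0 ≤ marginalPairing 𝕊 X fun _ => M :=
  sum_marginalAdjoint_mul X M ▸ hX.sum_mul_nonneg hM

theorem posSemidef_marginalAdjoint_iff {X : Finset ι → Matrix ι ι ℝ}
    (hX : ∀ S ∈ 𝕊, (X S).IsSymm) :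
    (marginalAdjoint 𝕊 X).PosSemidef ↔ ∀ v, 0 ≤ marginalPairing 𝕊 X fun _ => vecMulVec v v := by
  refine ⟨fun h v => marginalPairing_nonneg h (posSemidef_vecMulVec_self_star v), fun h => ?_⟩
  refine .of_dotProduct_mulVec_nonneg ?_ fun v => ?_
  · ext j k
    simp only [conjTranspose_apply, star_trivial, marginalAdjoint, of_apply, and_comm]
    exact Finset.sum_congr rfl fun S hS => (hX S (Finset.mem_filter.mp hS).1).apply j k
  · simpa [dotProduct_mulVec_eq_sum_mul_vecMulVec, sum_marginalAdjoint_mul] using h v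

theorem inner_marginalVec (Y : Finset ι → Matrix ι ι ℝ) (y : EuclideanSpace ℝ (Finset ι × ι × ι)) :
    ⟪marginalVec 𝕊 Y, y⟫ = marginalPairing 𝕊 (fun S => of fun j k => y (S, j, k)) Y := by
  simp only [PiLp.inner_apply, marginalVec, RCLike.inner_apply, conj_trivial, mul_ite, mul_zero,
    Fintype.sum_prod_type, ite_and, marginalPairing, of_apply, Finset.sum_ite_irrel,
    Finset.sum_const_zero, Finset.sum_ite_mem, Finset.univ_inter]

omit [DecidableEq ι] in
theorem isClosed_coveredPosSemidefCone :
    IsClosed (coveredPosSemidefCone 𝕊 : Set (Matrix ι ι ℝ)) := by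
  change IsClosed ({M : Matrix ι ι ℝ | M.PosSemidef} ∩ {M | ∀ j, ¬(∃ S ∈ 𝕊, j ∈ S) → M j j = 0})
  simp only [Set.ofPred_forall]
  exact isClosed_setOf_posSemidef.inter <| isClosed_iInter fun j => isClosed_iInter fun _ =>
    isClosed_eq (continuous_id.matrix_elem j j) continuous_const

theorem eq_zero_of_marginalMap_eq_zero {M : Matrix ι ι ℝ} (hM : M ∈ coveredPosSemidefCone 𝕊)
    (h : marginalMap 𝕊 M = 0) : M = 0 := by
  refine hM.1.trace_eq_zero_iff.mp (Finset.sum_eq_zero fun j _ => ?_)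
  by_cases hj : ∃ S ∈ 𝕊, j ∈ S
  · obtain ⟨S, hS, hjS⟩ := hj
    simpa [marginalMap, marginalVec_apply_of_mem _ hS hjS hjS] using congr($h (S, j, j))
  · exact hM.2 j hj

attribute [local instance] Matrix.seminormedAddCommGroup Matrix.normedAddCommGroup
  Matrix.normedSpace

theorem isClosed_map_coveredPosSemidefCone :
    IsClosed ((coveredPosSemidefCone 𝕊).map (marginalMap 𝕊) :
      Set (EuclideanSpace ℝ (Finset ι × ι × ι))) :=
  PointedCone.isClosed_map _ isClosed_coveredPosSemidefCone _
    fun _ => eq_zero_of_marginalMap_eq_zero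

theorem exists_mem_coveredPosSemidefCone_marginalMap_eq {Sig : Finset ι → Matrix ι ι ℝ}
    (hSig : ∀ S ∈ 𝕊, ∀ j ∈ S, ∀ k ∈ S, Sig S j k = Sig S k j)
    (h : ∀ X : Finset ι → Matrix ι ι ℝ, (∀ S ∈ 𝕊, (X S).IsSymm) →
      (marginalAdjoint 𝕊 X).PosSemidef → 0 ≤ marginalPairing 𝕊 X Sig) :
    ∃ M ∈ coveredPosSemidefCone 𝕊, marginalMap 𝕊 M = marginalVec 𝕊 Sig := by
  let C : ProperCone ℝ (EuclideanSpace ℝ (Finset ι × ι × ι)) :=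
    ⟨(coveredPosSemidefCone 𝕊).map (marginalMap 𝕊), isClosed_map_coveredPosSemidefCone⟩
  by_contra hb
  obtain ⟨y, hyC, hyb⟩ := C.hyperplane_separation' (x₀ := marginalVec 𝕊 Sig) hb
  set Y : Finset ι → Matrix ι ι ℝ := fun S => of fun j k => y (S, j, k)
  have hY : ∀ M ∈ coveredPosSemidefCone 𝕊, 0 ≤ marginalPairing 𝕊 Y fun _ => M :=
    fun M hM => (hyC _ ⟨M, hM, rfl⟩).trans_eq (inner_marginalVec (𝕊 := 𝕊) (fun _ => M) y)
  have hXsymm : ∀ S ∈ 𝕊, (Y S + (Y S)ᵀ).IsSymm := fun S _ => isSymm_add_transpose_self _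
  refine (h _ hXsymm ((posSemidef_marginalAdjoint_iff hXsymm).mpr fun v => ?_)).not_gt ?_
  · set w : ι → ℝ := fun j => if ∃ S ∈ 𝕊, j ∈ S then v j else 0
    have hw : vecMulVec w w ∈ coveredPosSemidefCone 𝕊 :=
      ⟨posSemidef_vecMulVec_self_star w, fun j hj => by
        simp only [w, vecMulVec_apply, if_neg hj, zero_mul]⟩
    rw [marginalPairing_add_transpose fun S _ j _ k _ => by simp [vecMulVec_apply, mul_comm],
      marginalPairing_congr_right (Y' := fun _ => vecMulVec w w) fun S hS j hj k hk => by
        simp only [w, vecMulVec_apply, if_pos (⟨S, hS, hj⟩ : ∃ S ∈ 𝕊, j ∈ S),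
          if_pos (⟨S, hS, hk⟩ : ∃ S ∈ 𝕊, k ∈ S)]]
    exact mul_nonneg zero_le_two (hY _ hw)
  · rw [marginalPairing_add_transpose hSig, ← inner_marginalVec]
    linarith

end Marginal

theorem stmt12_general {d : ℕ} (𝕊 : Finset (Finset (Fin d)))
    (Sig : Finset (Fin d) → Matrix (Fin d) (Fin d) ℝ)
    (hsymm : ∀ S ∈ 𝕊, ∀ j ∈ S, ∀ j' ∈ S, Sig S j j' = Sig S j' j) :
    (∃ M : Matrix (Fin d) (Fin d) ℝ, M.PosSemidef ∧
        ∀ S ∈ 𝕊, ∀ j ∈ S, ∀ j' ∈ S, M j j' = Sig S j j')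
      ↔ ∀ X𝕊 : Finset (Fin d) → Matrix (Fin d) (Fin d) ℝ,
          (∀ S ∈ 𝕊, (X𝕊 S).IsSymm) →
          (Matrix.of fun j j' : Fin d =>
              ∑ S ∈ 𝕊.filter (fun S => j ∈ S ∧ j' ∈ S), X𝕊 S j j').PosSemidef →
          0 ≤ ∑ S ∈ 𝕊, ∑ j ∈ S, ∑ j' ∈ S, X𝕊 S j j' * Sig S j j' := by
  constructor
  · rintro ⟨M, hM, hMSig⟩ X _ hX
    have := marginalPairing_nonneg hX hM
    rwa [marginalPairing_congr_right hMSig] at this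
  · intro h
    obtain ⟨M, hM, hMSig⟩ := exists_mem_coveredPosSemidefCone_marginalMap_eq hsymm h
    refine ⟨M, hM.1, fun S hS j hj k hk => ?_⟩
    simpa [marginalMap, marginalVec_apply_of_mem _ hS hj hk] using congr($hMSig (S, j, k))

/-- Characterisation of compatibility of a sequence of positive semi-definite matrices
`Σ_𝕊 = (Σ_S : S ∈ 𝕊)`: a common positive semi-definite completion exists iff
`⟨X_𝕊, Σ_𝕊⟩_𝕊 ≥ 0` for all sequences `X_𝕊` of symmetric matrices with `A* X_𝕊 ⪰ 0`. -/
theorem stmt12 {d : ℕ} (𝕊 : Finset (Finset (Fin d)))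
    (Sig : Finset (Fin d) → Matrix (Fin d) (Fin d) ℝ)
    (hsymm : ∀ S ∈ 𝕊, ∀ j ∈ S, ∀ j' ∈ S, Sig S j j' = Sig S j' j)
    (hpsd : ∀ S ∈ 𝕊, ∀ v : Fin d → ℝ,
      0 ≤ ∑ j ∈ S, ∑ j' ∈ S, v j * Sig S j j' * v j') :
    (∃ M : Matrix (Fin d) (Fin d) ℝ, M.PosSemidef ∧
        ∀ S ∈ 𝕊, ∀ j ∈ S, ∀ j' ∈ S, M j j' = Sig S j j')
      ↔ ∀ X𝕊 : Finset (Fin d) → Matrix (Fin d) (Fin d) ℝ,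
          (∀ S ∈ 𝕊, (X𝕊 S).IsSymm) →
          (Matrix.of fun j j' : Fin d =>
              ∑ S ∈ 𝕊.filter (fun S => j ∈ S ∧ j' ∈ S), X𝕊 S j j').PosSemidef →
          0 ≤ ∑ S ∈ 𝕊, ∑ j ∈ S, ∑ j' ∈ S, X𝕊 S j j' * Sig S j j' :=
  stmt12_general 𝕊 Sig hsymm
end

section
/- For θ₁, θ₂ ∈ [0, π] with θ₁ ≥ θ₂, the quantity inf{ max(|x − cos θ₁|, |x − cos θ₂|) : x ∈ [−1,1], max(|x − cos θ₁|, |x − cos θ₂|) ≤ 1 − |x| } equals (cos θ₂ − cos θ₁)/2. -/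
/-- Explicit value of the incompatibility measure for the 3-cycle with correlations
`(cos θ₁, cos θ₂, 1)`:
`inf { max(|x − cos θ₁|, |x − cos θ₂|) : x ∈ [−1,1], max(...) ≤ 1 − |x| }
  = (cos θ₂ − cos θ₁)/2`. -/
theorem stmt13 (θ₁ θ₂ : ℝ) (h1 : θ₁ ∈ Set.Icc (0 : ℝ) Real.pi)
    (h2 : θ₂ ∈ Set.Icc (0 : ℝ) Real.pi) (h12 : θ₂ ≤ θ₁) :
    sInf {r : ℝ | ∃ x ∈ Set.Icc (-1 : ℝ) 1,
        r = max |x - Real.cos θ₁| |x - Real.cos θ₂| ∧ r ≤ 1 - |x|}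
      = (Real.cos θ₂ - Real.cos θ₁) / 2 := by
  set c1 := Real.cos θ₁ with hc1
  set c2 := Real.cos θ₂ with hc2
  have hcc : c1 ≤ c2 :=
    Real.cos_le_cos_of_nonneg_of_le_pi h2.1 h1.2 h12
  have hb1 : (-1 : ℝ) ≤ c1 := Real.neg_one_le_cos θ₁
  have hb2 : c2 ≤ 1 := Real.cos_le_one θ₂
  set x0 := (c1 + c2) / 2 with hx0
  have hmem : (c2 - c1) / 2 ∈ {r : ℝ | ∃ x ∈ Set.Icc (-1 : ℝ) 1,
      r = max |x - c1| |x - c2| ∧ r ≤ 1 - |x|} := by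
    refine ⟨x0, ⟨by simp [hx0]; linarith, by simp [hx0]; linarith⟩, ?_, ?_⟩
    · have e1 : |x0 - c1| = (c2 - c1) / 2 := by
        rw [abs_of_nonneg (by simp [hx0]; linarith)]; ring
      have e2 : |x0 - c2| = (c2 - c1) / 2 := by
        rw [abs_of_nonpos (by simp [hx0]; linarith)]; ring
      simp [e1, e2]
    · rcases abs_cases x0 with ⟨h, _⟩ | ⟨h, _⟩ <;> rw [h] <;> simp [hx0] <;> linarith
  apply le_antisymm
  · exact csInf_le ⟨(c2 - c1) / 2, fun r ⟨x, _, hr, _⟩ => by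
      rw [hr]
      have := abs_sub_abs_le_abs_sub (x - c1) (x - c2)
      have h1' := le_max_left |x - c1| |x - c2|
      have h2' := le_max_right |x - c1| |x - c2|
      have : |c2 - c1| ≤ |x - c1| + |x - c2| := by
        have := abs_sub (x - c2) (x - c1)
        calc |c2 - c1| = |(x - c1) - (x - c2)| := by ring_nf
          _ ≤ |x - c1| + |x - c2| := abs_sub _ _
      rw [abs_of_nonneg (by linarith)] at this
      linarith⟩ hmem
  · apply le_csInf ⟨_, hmem⟩
    rintro r ⟨x, _, hr, _⟩
    rw [hr]
    have h1' := le_max_left |x - c1| |x - c2|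
    have h2' := le_max_right |x - c1| |x - c2|
    have : |c2 - c1| ≤ |x - c1| + |x - c2| := by
      calc |c2 - c1| = |(x - c1) - (x - c2)| := by ring_nf
        _ ≤ |x - c1| + |x - c2| := abs_sub _ _
    rw [abs_of_nonneg (by linarith)] at this
    linarith
end

section
/- Let θ₁ ∈ [0, π]. The supremum of λ ∈ [0,1] such that there exists x ∈ [−λ, λ] with |x − cos θ₁| ≤ 1 − λ and |λ − 1| ≤ 1 − λ and the matrix [[λ, x, λ],[x, λ, λ],[λ, λ, λ]] ⪰ 0 equals cos²(θ₁/2). -/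
lemma allones_psd (l : ℝ) (hl : 0 ≤ l) :
    (!![l, l, l; l, l, l; l, l, l] : Matrix (Fin 3) (Fin 3) ℝ).PosSemidef := by
  rw [Matrix.posSemidef_iff_dotProduct_mulVec]; constructor
  · ext i j; fin_cases i <;> fin_cases j <;>
      simp [Matrix.conjTranspose, Matrix.vecHead, Matrix.vecTail]
  · intro v
    have : dotProduct (star v) ((!![l, l, l; l, l, l; l, l, l]).mulVec v)
        = l * (v 0 + v 1 + v 2)^2 := by
      simp [dotProduct, Matrix.mulVec, Fin.sum_univ_three, Matrix.vecHead, Matrix.vecTail]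
      ring
    rw [this]; positivity

/-- Dual SDP value for the 3-cycle with correlations `(cos θ₁, 1, 1)`: the supremum of
`λ ∈ [0,1]` admitting `x ∈ [−λ,λ]` with `|x − cos θ₁| ≤ 1 − λ`, `|λ − 1| ≤ 1 − λ`, and
`[[λ,x,λ],[x,λ,λ],[λ,λ,λ]] ⪰ 0` equals `cos²(θ₁/2)`. -/
theorem stmt14 (θ₁ : ℝ) (h1 : θ₁ ∈ Set.Icc (0 : ℝ) Real.pi) :
    sSup {l : ℝ | l ∈ Set.Icc (0 : ℝ) 1 ∧ ∃ x ∈ Set.Icc (-l) l,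
        |x - Real.cos θ₁| ≤ 1 - l ∧ |l - 1| ≤ 1 - l ∧
        (!![l, x, l; x, l, l; l, l, l]).PosSemidef}
      = Real.cos (θ₁ / 2) ^ 2 := by
  set c := Real.cos (θ₁ / 2) ^ 2 with hc
  have hcos : Real.cos θ₁ = 2 * c - 1 := by
    have h := Real.cos_sq (θ₁ / 2)
    rw [mul_div_cancel₀ θ₁ (two_ne_zero)] at h
    rw [hc, h]; ring
  have hc0 : 0 ≤ c := sq_nonneg _
  have hc1 : c ≤ 1 := by
    nlinarith [Real.neg_one_le_cos θ₁, Real.cos_le_one θ₁]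
  set S := {l : ℝ | l ∈ Set.Icc (0 : ℝ) 1 ∧ ∃ x ∈ Set.Icc (-l) l,
        |x - Real.cos θ₁| ≤ 1 - l ∧ |l - 1| ≤ 1 - l ∧
        (!![l, x, l; x, l, l; l, l, l]).PosSemidef} with hS
  have hmem : c ∈ S := by
    refine ⟨⟨hc0, hc1⟩, c, ⟨by linarith, le_refl c⟩, ?_, ?_, allones_psd c hc0⟩
    · rw [hcos, abs_le]; constructor <;> linarith
    · rw [abs_le]; constructor <;> linarith
  have hub : ∀ l ∈ S, l ≤ c := by
    rintro l ⟨⟨hl0, hl1⟩, x, ⟨hx1, hx2⟩, habs, -, hpsd⟩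
    have hq := hpsd.dotProduct_mulVec_nonneg ![1, 1, -2]
    have hxl : x ≥ l := by
      have : dotProduct (star (![1, 1, -2] : Fin 3 → ℝ))
          ((!![l, x, l; x, l, l; l, l, l]).mulVec ![1, 1, -2]) = 2 * (x - l) := by
        simp [dotProduct, Matrix.mulVec, Fin.sum_univ_three, Matrix.vecHead,
          Matrix.vecTail]
        ring
      rw [this] at hq; linarith
    have hxe : x = l := le_antisymm hx2 hxl
    subst hxe
    rw [abs_le, hcos] at habs
    linarith [habs.2]
  exact le_antisymm (csSup_le ⟨c, hmem⟩ hub) (le_csSup ⟨c, hub⟩ hmem)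
end
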